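/- arXiv:1608.05033 — 5 statements merged into one kernel-verified Lean document; each statement's English description precedes it below -/
import Mathlib

section
/- Let Γ be a group of polynomial growth of degree d, so that |B(n)|/n^d converges to a positive limit. For every ε ∈ (0,1) there exists n₀ ∈ ℕ (depending only on Γ and ε) such that: for every nonnegative function f on Γ, every interval (α,β) with 0 < α < β, and all n, m with n₀ ≤ n < m, if the average of f over B(n) exceeds β and the average of f over B(m) is less than α, then m/n > (1−ε)(β/α)^{1/d}. -/
open Filter MeasureTheory Function Set
open scoped BigOperators

variable {Γ : Type*} [Group Γ]

/-- The word norm associated to a finite generating set `S`: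
the infimum of `Σ |pᵢ|` over all representations `γ = s₁^{p₁} ⋯ s_l^{p_l}` with `sᵢ ∈ S`. -/
noncomputable def wordNorm (S : Finset Γ) (γ : Γ) : ℕ :=
  sInf {n | ∃ l : List (Γ × ℤ), (∀ p ∈ l, p.1 ∈ S) ∧
    (l.map fun p => p.1 ^ p.2).prod = γ ∧ (l.map fun p => p.2.natAbs).sum = n}

/-- Closed ball of radius `r` around `x` for the right word metric `d_R(x,y) = ‖x y⁻¹‖`. -/
def wordBall (S : Finset Γ) (x : Γ) (r : ℝ) : Set Γ :=
  {y | (wordNorm S (x * y⁻¹) : ℝ) ≤ r}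

/-- Gap lemma: if the average of `f` over `B(n)` exceeds `β` and the one over `B(m)`
is below `α` with `n₀ ≤ n < m`, then `m/n > (1-ε)(β/α)^{1/d}`. -/
theorem gap_lemma (S : Finset Γ) (hS : Subgroup.closure (S : Set Γ) = ⊤)
    (d : ℕ) (hd : 0 < d) (cΓ : ℝ) (hc : 0 < cΓ)
    (hP : Tendsto (fun n : ℕ => ((wordBall S 1 (n : ℝ)).ncard : ℝ) / (n : ℝ) ^ d)
      atTop (nhds cΓ))
    (ε : ℝ) (hε : ε ∈ Set.Ioo (0 : ℝ) 1) :
    ∃ n₀ : ℕ, ∀ f : Γ → ℝ, (∀ g, 0 ≤ f g) → ∀ α β : ℝ, 0 < α → α < β →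
      ∀ n m : ℕ, n₀ ≤ n → n < m →
      β < (∑ᶠ g ∈ wordBall S 1 (n : ℝ), f g) / ((wordBall S 1 (n : ℝ)).ncard : ℝ) →
      (∑ᶠ g ∈ wordBall S 1 (m : ℝ), f g) / ((wordBall S 1 (m : ℝ)).ncard : ℝ) < α →
      (1 - ε) * (β / α) ^ (1 / (d : ℝ)) < (m : ℝ) / (n : ℝ) := by
  
  obtain ⟨hε0, hε1⟩ := hε
  set t : ℝ := (1 - ε) ^ d with ht_def
  have ht0 : 0 < t := pow_pos (by linarith) d
  have ht1 : t < 1 := pow_lt_one₀ (by linarith) (by linarith) hd.ne'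
  have h1t : (0:ℝ) < 1 + t := by linarith
  set δ : ℝ := cΓ * (1 - t) / (1 + t) with hδ_def
  have hδ : 0 < δ := by
    apply div_pos (mul_pos hc (by linarith)) h1t
  have hcδ : 0 < cΓ - δ := by
    rw [hδ_def, sub_pos]
    rw [div_lt_iff₀ h1t]
    nlinarith
  have hratio : cΓ - δ = t * (cΓ + δ) := by
    rw [hδ_def]; field_simp; ring
  obtain ⟨N, hN⟩ := Metric.tendsto_atTop.mp hP δ hδ
  refine ⟨max N 1, ?_⟩
  intro f hf α β hα hαβ n m hn hnm havgn havgm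
  have hm : max N 1 ≤ m := le_trans hn hnm.le
  -- key estimate for all k ≥ n₀
  have hkey : ∀ k : ℕ, max N 1 ≤ k →
      (cΓ - δ) * (k:ℝ) ^ d < ((wordBall S 1 (k:ℝ)).ncard : ℝ) ∧
      ((wordBall S 1 (k:ℝ)).ncard : ℝ) < (cΓ + δ) * (k:ℝ) ^ d := by
    intro k hk
    have hk1 : 1 ≤ k := le_trans (le_max_right N 1) hk
    have hkd : (0:ℝ) < (k:ℝ) ^ d := by positivity
    have := hN k (le_trans (le_max_left N 1) hk)
    rw [Real.dist_eq, abs_lt] at this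
    constructor
    · have : cΓ - δ < ((wordBall S 1 (k:ℝ)).ncard : ℝ) / (k:ℝ) ^ d := by linarith [this.1]
      calc (cΓ - δ) * (k:ℝ) ^ d
          < (((wordBall S 1 (k:ℝ)).ncard : ℝ) / (k:ℝ) ^ d) * (k:ℝ) ^ d :=
            by exact mul_lt_mul_of_pos_right this hkd
        _ = ((wordBall S 1 (k:ℝ)).ncard : ℝ) := by field_simp
    · have h2 : ((wordBall S 1 (k:ℝ)).ncard : ℝ) / (k:ℝ) ^ d < cΓ + δ := by linarith [this.2]
      calc ((wordBall S 1 (k:ℝ)).ncard : ℝ)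
          = (((wordBall S 1 (k:ℝ)).ncard : ℝ) / (k:ℝ) ^ d) * (k:ℝ) ^ d := by field_simp
        _ < (cΓ + δ) * (k:ℝ) ^ d := mul_lt_mul_of_pos_right h2 hkd
  have hn1 : 1 ≤ n := le_trans (le_max_right N 1) hn
  have hnpos : (0:ℝ) < (n:ℝ) := by exact_mod_cast Nat.lt_of_lt_of_le Nat.zero_lt_one hn1
  have hmpos : (0:ℝ) < (m:ℝ) := by exact_mod_cast Nat.lt_of_lt_of_le (Nat.lt_of_lt_of_le Nat.zero_lt_one hn1) hnm.le
  have hnd : (0:ℝ) < (n:ℝ) ^ d := pow_pos hnpos d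
  have hmd : (0:ℝ) < (m:ℝ) ^ d := pow_pos hmpos d
  obtain ⟨hbn_lo, _⟩ := hkey n hn
  obtain ⟨_, hbm_hi⟩ := hkey m hm
  have hbn : (0:ℝ) < ((wordBall S 1 (n:ℝ)).ncard : ℝ) :=
    lt_trans (mul_pos hcδ hnd) hbn_lo
  have hbm : (0:ℝ) < ((wordBall S 1 (m:ℝ)).ncard : ℝ) := by
    obtain ⟨h, _⟩ := hkey m hm
    have : (0:ℝ) < (cΓ - δ) * (m:ℝ) ^ d := mul_pos hcδ hmd
    linarith
  -- finiteness of balls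
  have hfinn : (wordBall S 1 (n:ℝ)).Finite := by
    by_contra h
    rw [Set.Infinite.ncard h] at hbn
    simp at hbn
  have hfinm : (wordBall S 1 (m:ℝ)).Finite := by
    by_contra h
    rw [Set.Infinite.ncard h] at hbm
    simp at hbm
  -- subset
  have hsub : wordBall S 1 (n:ℝ) ⊆ wordBall S 1 (m:ℝ) := by
    intro y hy
    have hy' : (wordNorm S (1 * y⁻¹) : ℝ) ≤ (n:ℝ) := hy
    have hmn : ((n:ℝ)) ≤ (m:ℝ) := by exact_mod_cast hnm.le
    exact le_trans hy' hmn
  -- sums compare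
  have hSnm : (∑ᶠ g ∈ wordBall S 1 (n:ℝ), f g) ≤ ∑ᶠ g ∈ wordBall S 1 (m:ℝ), f g := by
    rw [← Set.Finite.coe_toFinset hfinn, ← Set.Finite.coe_toFinset hfinm,
      finsum_mem_coe_finset, finsum_mem_coe_finset]
    apply Finset.sum_le_sum_of_subset_of_nonneg
    · intro x hx
      rw [Set.Finite.mem_toFinset] at *
      exact hsub hx
    · intro i _ _; exact hf i
  have hβn : β * ((wordBall S 1 (n:ℝ)).ncard : ℝ) < ∑ᶠ g ∈ wordBall S 1 (n:ℝ), f g :=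
    (lt_div_iff₀ hbn).mp havgn
  have hαm : (∑ᶠ g ∈ wordBall S 1 (m:ℝ), f g) < α * ((wordBall S 1 (m:ℝ)).ncard : ℝ) :=
    (div_lt_iff₀ hbm).mp havgm
  have hβ : 0 < β := lt_trans hα hαβ
  have hchain : β * ((cΓ - δ) * (n:ℝ) ^ d) < α * ((cΓ + δ) * (m:ℝ) ^ d) := by
    have h1 : β * ((cΓ - δ) * (n:ℝ) ^ d) < β * ((wordBall S 1 (n:ℝ)).ncard : ℝ) :=
      mul_lt_mul_of_pos_left hbn_lo hβ
    have h2 : α * ((wordBall S 1 (m:ℝ)).ncard : ℝ) < α * ((cΓ + δ) * (m:ℝ) ^ d) :=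
      mul_lt_mul_of_pos_left hbm_hi hα
    linarith
  -- divide by (cΓ + δ) > 0 after rewriting cΓ - δ = t (cΓ + δ)
  have hcδ' : (0:ℝ) < cΓ + δ := by linarith
  have hmain : t * β * (n:ℝ) ^ d < α * (m:ℝ) ^ d := by
    rw [hratio] at hchain
    nlinarith [hchain]
  have hfrac : t * (β / α) < ((m:ℝ) / (n:ℝ)) ^ d := by
    rw [div_pow, mul_div_assoc', div_lt_div_iff₀ hα hnd]
    linarith [hmain]
  -- take d-th roots via rpow
  have hdR : (0:ℝ) < 1 / (d:ℝ) := by positivity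
  have hLnn : (0:ℝ) ≤ t * (β / α) := by positivity
  have hrpow := Real.rpow_lt_rpow hLnn hfrac hdR
  have hmn0 : (0:ℝ) ≤ (m:ℝ) / (n:ℝ) := by positivity
  have hdne : (d:ℝ) ≠ 0 := Nat.cast_ne_zero.mpr hd.ne'
  have hRHS : (((m:ℝ) / (n:ℝ)) ^ d) ^ (1 / (d:ℝ)) = (m:ℝ) / (n:ℝ) := by
    rw [← Real.rpow_natCast ((m:ℝ)/(n:ℝ)) d, ← Real.rpow_mul hmn0, mul_one_div,
      div_self hdne, Real.rpow_one]
  have hT : t ^ (1 / (d:ℝ)) = 1 - ε := by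
    rw [ht_def, ← Real.rpow_natCast (1-ε) d, ← Real.rpow_mul (by linarith), mul_one_div,
      div_self hdne, Real.rpow_one]
  have hLHS : (t * (β / α)) ^ (1 / (d:ℝ)) = (1 - ε) * (β / α) ^ (1 / (d:ℝ)) := by
    rw [Real.mul_rpow ht0.le (by positivity), hT]
  rw [hLHS, hRHS] at hrpow
  exact hrpow
end

section
/- (Transference principle) Let Γ be a group of polynomial growth acting on a probability space (X,ℬ,μ) by measure-preserving transformations, let E ⊆ X be measurable, let m ∈ ℕ, and for L ∈ ℕ and x ∈ X set B_{L,m,x} := {g ∈ Γ : g·x ∈ E and ‖g‖ ≤ L−m}. Suppose t ≥ 0 and there exists L₀ such that for all L ≥ L₀ and μ-almost all x, |B_{L,m,x}|/|B(L)| ≤ t. Then μ(E) ≤ t. -/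
/-!
Double counting: for a finite `B ⊆ Γ`, each `g` preserves `μ`, so integrating
`x ↦ #{g ∈ B | g • x ∈ E}` gives `|B| μ(E)`. For `B = B(L - m)` the hypothesis bounds the integrand
by `t |B(L)|`, hence `μ(E) ≤ t |B(L)| / |B(L - m)|`, and polynomial growth `|B(n)| ~ c nᵈ` makes
this ratio tend to `1`.
-/

open Filter MeasureTheory Function Set
open scoped BigOperators

variable {Γ : Type*} [Group Γ]

open scoped Pointwise Topology

section WordNorm

variable (S : Finset Γ)

theorem exists_repr_wordNorm (hS : Subgroup.closure (S : Set Γ) = ⊤) (γ : Γ) :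
    ∃ l : List (Γ × ℤ), (∀ p ∈ l, p.1 ∈ S) ∧
      (l.map fun p => p.1 ^ p.2).prod = γ ∧ (l.map fun p => p.2.natAbs).sum = wordNorm S γ := by
  classical
  refine Nat.sInf_mem (s := {n | ∃ l : List (Γ × ℤ), (∀ p ∈ l, p.1 ∈ S) ∧
    (l.map fun p => p.1 ^ p.2).prod = γ ∧ (l.map fun p => p.2.natAbs).sum = n}) ?_
  have hγ : γ ∈ Submonoid.closure ((S : Set Γ) ∪ (S : Set Γ)⁻¹) := by
    rw [← Subgroup.closure_toSubmonoid, hS]; trivial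
  obtain ⟨l, hl, rfl⟩ := Submonoid.exists_list_of_mem_closure hγ
  let toPair : Γ → Γ × ℤ := fun y => if y ∈ S then (y, 1) else (y⁻¹, -1)
  refine ⟨_, l.map toPair, ?_, ?_, rfl⟩
  · simp only [List.mem_map, forall_exists_index, and_imp, forall_apply_eq_imp_iff₂]
    intro y hy
    have := hl y hy
    by_cases h : y ∈ S <;> simp_all [toPair]
  · rw [List.map_map, List.map_congr_left (g := id), List.map_id]
    intro y _
    by_cases h : y ∈ S <;> simp [toPair, h]

theorem wordNorm_one : wordNorm S 1 = 0 :=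
  Nat.sInf_eq_zero.2 (Or.inl ⟨[], by simp, by simp, by simp⟩)

theorem mem_pow_of_wordNorm_le [DecidableEq Γ] (hS : Subgroup.closure (S : Set Γ) = ⊤)
    {g : Γ} {n : ℕ} (hg : wordNorm S g ≤ n) : g ∈ (insert 1 (S ∪ S⁻¹)) ^ n := by
  set A : Finset Γ := insert 1 (S ∪ S⁻¹)
  obtain ⟨l, hlS, rfl, hsum⟩ := exists_repr_wordNorm S hS g
  refine Finset.pow_subset_pow_right (Finset.mem_insert_self 1 _) (hsum ▸ hg) ?_
  clear hsum hg
  induction l with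
  | nil => simp
  | cons p l ih =>
    obtain ⟨s, k⟩ := p
    have hs : s ∈ S := hlS (s, k) (by simp)
    have hp : s ^ k ∈ A ^ k.natAbs := by
      obtain ⟨n, rfl | rfl⟩ := Int.eq_nat_or_neg k
      · simpa using Finset.pow_mem_pow (n := n) (by simp [A, hs] : s ∈ A)
      · simpa using Finset.pow_mem_pow (n := n) (by simp [A, hs] : s⁻¹ ∈ A)
    simp only [List.map_cons, List.prod_cons, List.sum_cons, pow_add]
    exact Finset.mul_mem_mul hp (ih fun q hq => hlS q (by simp [hq]))

theorem finite_setOf_wordNorm_le (hS : Subgroup.closure (S : Set Γ) = ⊤) (r : ℝ) :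
    {g : Γ | (wordNorm S g : ℝ) ≤ r}.Finite := by
  classical
  refine ((insert 1 (S ∪ S⁻¹)) ^ ⌈r⌉₊ : Finset Γ).finite_toSet.subset fun g hg => ?_
  exact mem_pow_of_wordNorm_le S hS (Nat.cast_le.1 (hg.trans (Nat.le_ceil r)))

theorem wordBall_one (r : ℝ) : wordBall S 1 r = {g : Γ | (wordNorm S g : ℝ) ≤ r}⁻¹ := by
  ext
  simp [wordBall]

theorem ncard_wordBall_one_pos (hS : Subgroup.closure (S : Set Γ) = ⊤) {r : ℝ}
    (hr : 0 ≤ r) : 0 < (wordBall S 1 r).ncard := by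
  rw [wordBall_one, Set.ncard_inv]
  exact (Set.ncard_pos (finite_setOf_wordNorm_le S hS r)).2 ⟨1, by simpa [wordNorm_one] using hr⟩

end WordNorm

section Counting

variable {ι X : Type*} {T : ι → X → X} {E : Set X} {B : Set ι}

theorem ncard_setOf_apply_mem_eq_sum_indicator (hB : B.Finite) :
    (fun x => ({g | T g x ∈ E ∧ g ∈ B}.ncard : ℝ)) =
      fun x => ∑ g ∈ hB.toFinset, (T g ⁻¹' E).indicator 1 x := by
  classical
  ext x
  have : {g | T g x ∈ E ∧ g ∈ B} = ↑(hB.toFinset.filter fun g => T g x ∈ E) := by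
    ext; simp [and_comm]
  rw [this, Set.ncard_coe_finset, Finset.card_filter]
  push_cast
  simp [Set.indicator_apply]

variable [MeasurableSpace X] {μ : Measure X}

theorem integrable_ncard_setOf_apply_mem [IsFiniteMeasure μ]
    (hmp : ∀ g, MeasurePreserving (T g) μ μ) (hE : MeasurableSet E) (hB : B.Finite) :
    Integrable (fun x => ({g | T g x ∈ E ∧ g ∈ B}.ncard : ℝ)) μ := by
  rw [ncard_setOf_apply_mem_eq_sum_indicator hB]
  exact integrable_finsetSum _ fun g _ => (integrable_const 1).indicator ((hmp g).measurable hE)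

theorem integral_ncard_setOf_apply_mem [IsFiniteMeasure μ]
    (hmp : ∀ g, MeasurePreserving (T g) μ μ) (hE : MeasurableSet E) (hB : B.Finite) :
    ∫ x, ({g | T g x ∈ E ∧ g ∈ B}.ncard : ℝ) ∂μ = B.ncard * μ.real E := by
  have hmeas : ∀ g, MeasurableSet (T g ⁻¹' E) := fun g => (hmp g).measurable hE
  rw [ncard_setOf_apply_mem_eq_sum_indicator hB,
    integral_finsetSum _ fun g _ => (integrable_const 1).indicator (hmeas g)]
  simp_rw [integral_indicator_one (hmeas _), (hmp _).measureReal_preimage hE.nullMeasurableSet]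
  rw [Finset.sum_const, nsmul_eq_mul, Set.ncard_eq_toFinset_card B hB]

theorem ncard_mul_measureReal_le_of_ae_ncard_le [IsProbabilityMeasure μ]
    (hmp : ∀ g, MeasurePreserving (T g) μ μ) (hE : MeasurableSet E) (hB : B.Finite) {c : ℝ}
    (hc : ∀ᵐ x ∂μ, ({g | T g x ∈ E ∧ g ∈ B}.ncard : ℝ) ≤ c) : B.ncard * μ.real E ≤ c :=
  calc (B.ncard : ℝ) * μ.real E = ∫ x, ({g | T g x ∈ E ∧ g ∈ B}.ncard : ℝ) ∂μ :=
        (integral_ncard_setOf_apply_mem hmp hE hB).symm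
    _ ≤ ∫ _, c ∂μ :=
        integral_mono_ae (integrable_ncard_setOf_apply_mem hmp hE hB) (integrable_const c) hc
    _ = c := by simp

end Counting

theorem tendsto_div_sub_of_tendsto_div_pow {N : ℕ → ℝ} {d : ℕ} {c : ℝ} (hc : c ≠ 0)
    (hN : Tendsto (fun n => N n / (n : ℝ) ^ d) atTop (𝓝 c)) (m : ℕ) :
    Tendsto (fun n => N (n - m) / N n) atTop (𝓝 1) := by
  rw [← tendsto_add_atTop_iff_nat m]
  simp only [Nat.add_sub_cancel]
  have hshift : Tendsto (fun n : ℕ => N (n + m) / ((n : ℝ) + m) ^ d) atTop (𝓝 c) := by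
    simpa [Function.comp_def] using hN.comp (tendsto_add_atTop_nat m)
  have hratio : Tendsto (fun n : ℕ => ((n : ℝ) / (n + m)) ^ d) atTop (𝓝 1) := by
    simpa using (tendsto_natCast_div_add_atTop (m : ℝ)).pow d
  have h := (hN.mul hratio).div hshift hc
  rw [mul_one, div_self hc] at h
  refine h.congr' ?_
  filter_upwards [eventually_ne_atTop 0] with n hn
  simp only [Pi.div_apply, div_pow]
  rcases eq_or_ne (N (n + m)) 0 with h0 | h0
  · simp [h0]
  · have : (n : ℝ) + m ≠ 0 := by positivity
    field_simp

theorem transference_principle_general (S : Finset Γ) (hS : Subgroup.closure (S : Set Γ) = ⊤)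
    (d : ℕ) (cΓ : ℝ) (hc : 0 < cΓ)
    (hP : Tendsto (fun n : ℕ => ((wordBall S 1 (n : ℝ)).ncard : ℝ) / (n : ℝ) ^ d)
      atTop (nhds cΓ))
    {X : Type*} [MeasurableSpace X] (μ : Measure X) [IsProbabilityMeasure μ]
    (T : Γ → X → X)
    (hmp : ∀ g, MeasurePreserving (T g) μ μ)
    (E : Set X) (hE : MeasurableSet E) (m : ℕ) (t : ℝ)
    (h : ∃ L₀ : ℕ, ∀ L : ℕ, L₀ ≤ L → ∀ᵐ x ∂μ,
      (({g : Γ | T g x ∈ E ∧ (wordNorm S g : ℝ) ≤ (L : ℝ) - (m : ℝ)}).ncard : ℝ) /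
        ((wordBall S 1 (L : ℝ)).ncard : ℝ) ≤ t) :
    μ E ≤ ENNReal.ofReal t := by
  obtain ⟨L₀, hL₀⟩ := h
  set N : ℕ → ℝ := fun L => ((wordBall S 1 L).ncard : ℝ)
  have hNpos (L : ℕ) : 0 < N L := Nat.cast_pos.2 (ncard_wordBall_one_pos S hS L.cast_nonneg)
  have hbound (L : ℕ) (hL : max L₀ m ≤ L) : μ.real E * (N (L - m) / N L) ≤ t := by
    have hN : N (L - m) = {g : Γ | (wordNorm S g : ℝ) ≤ L - m}.ncard := by
      simp only [N, wordBall_one, Set.ncard_inv, Nat.cast_sub (le_of_max_le_right hL)]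
    rw [← mul_div_assoc, div_le_iff₀ (hNpos L), mul_comm, hN]
    refine ncard_mul_measureReal_le_of_ae_ncard_le hmp hE (finite_setOf_wordNorm_le S hS _) ?_
    filter_upwards [hL₀ L (le_of_max_le_left hL)] with x hx
    exact (div_le_iff₀ (hNpos L)).1 hx
  have hlim := (tendsto_div_sub_of_tendsto_div_pow hc.ne' hP m).const_mul (μ.real E)
  rw [mul_one] at hlim
  have hE_le : μ.real E ≤ t := le_of_tendsto hlim ((eventually_ge_atTop _).mono hbound)
  rw [← ofReal_measureReal]
  exact ENNReal.ofReal_le_ofReal hE_le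

/-- Transference principle: a universal upper bound on the density of
`B_{L,m,x} = {g : g·x ∈ E, ‖g‖ ≤ L-m}` in `B(L)` bounds `μ(E)` from above. -/
theorem transference_principle (S : Finset Γ) (hS : Subgroup.closure (S : Set Γ) = ⊤)
    (d : ℕ) (cΓ : ℝ) (hc : 0 < cΓ)
    (hP : Tendsto (fun n : ℕ => ((wordBall S 1 (n : ℝ)).ncard : ℝ) / (n : ℝ) ^ d)
      atTop (nhds cΓ))
    {X : Type*} [MeasurableSpace X] (μ : Measure X) [IsProbabilityMeasure μ]
    (T : Γ → X → X) (hT1 : ∀ x, T 1 x = x) (hTmul : ∀ g h x, T (g * h) x = T g (T h x))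
    (hmp : ∀ g, MeasurePreserving (T g) μ μ)
    (E : Set X) (hE : MeasurableSet E) (m : ℕ) (t : ℝ) (ht : 0 ≤ t)
    (h : ∃ L₀ : ℕ, ∀ L : ℕ, L₀ ≤ L → ∀ᵐ x ∂μ,
      (({g : Γ | T g x ∈ E ∧ (wordNorm S g : ℝ) ≤ (L : ℝ) - (m : ℝ)}).ncard : ℝ) /
        ((wordBall S 1 (L : ℝ)).ncard : ℝ) ≤ t) :
    μ E ≤ ENNReal.ofReal t :=
  transference_principle_general S hS d cΓ hc hP μ T hmp E hE m t h
end

section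
/- (Maximal ball engulfing) Let Γ be a group of polynomial growth with right word metric, let R, r > 2 be natural numbers, X ⊆ B(R), and suppose to each p ∈ X are associated balls A₁(p),…,A_n(p) with p ∈ A_i(p) ⊆ B(R) and the r-enlargement of A_i(p) contained in A_{i+1}(p) for i < n. Call A_j(q) maximal if it is contained in no other j-th level ball A_j(q'). If 1 ≤ i < j ≤ n, A_j(q) is maximal, and A_i(p) ∩ A_j(q) ≠ ∅, then A_i(p) ⊆ (1 + 4/(r−2))·A_j(q). -/
open Filter MeasureTheory Function Set
open scoped BigOperators

variable {Γ : Type*} [Group Γ]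

lemma exists_rep (S : Finset Γ) (hS : Subgroup.closure (S : Set Γ) = ⊤) (γ : Γ) :
    ∃ l : List (Γ × ℤ), (∀ p ∈ l, p.1 ∈ S) ∧ (l.map fun p => p.1 ^ p.2).prod = γ := by
  have hγ : γ ∈ Subgroup.closure (S : Set Γ) := hS ▸ Subgroup.mem_top γ
  induction hγ using Subgroup.closure_induction with
  | mem x hx => exact ⟨[(x, 1)], by simpa using hx, by simp⟩
  | one => exact ⟨[], by simp, by simp⟩
  | mul x y hx hy ihx ihy =>
      obtain ⟨lx, h1, h2⟩ := ihx
      obtain ⟨ly, h3, h4⟩ := ihy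
      refine ⟨lx ++ ly, ?_, ?_⟩
      · intro a ha; rcases List.mem_append.1 ha with h | h
        · exact h1 a h
        · exact h3 a h
      · simp [h2, h4]
  | inv x hx ih =>
      obtain ⟨l, h1, h2⟩ := ih
      refine ⟨(l.map fun a => (a.1, -a.2)).reverse, ?_, ?_⟩
      · intro a ha
        simp only [List.mem_reverse, List.mem_map] at ha
        obtain ⟨b, hb, rfl⟩ := ha
        exact h1 b hb
      · rw [← h2, List.prod_inv_reverse]
        simp [Function.comp_def]

lemma repSet_nonempty (S : Finset Γ) (hS : Subgroup.closure (S : Set Γ) = ⊤) (γ : Γ) :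
    {n | ∃ l : List (Γ × ℤ), (∀ p ∈ l, p.1 ∈ S) ∧
      (l.map fun p => p.1 ^ p.2).prod = γ ∧ (l.map fun p => p.2.natAbs).sum = n}.Nonempty := by
  obtain ⟨l, h1, h2⟩ := exists_rep S hS γ
  exact ⟨_, l, h1, h2, rfl⟩

lemma wordNorm_spec (S : Finset Γ) (hS : Subgroup.closure (S : Set Γ) = ⊤) (γ : Γ) :
    ∃ l : List (Γ × ℤ), (∀ p ∈ l, p.1 ∈ S) ∧
      (l.map fun p => p.1 ^ p.2).prod = γ ∧ (l.map fun p => p.2.natAbs).sum = wordNorm S γ :=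
  Nat.sInf_mem (repSet_nonempty S hS γ)

lemma wordNorm_mul_le (S : Finset Γ) (hS : Subgroup.closure (S : Set Γ) = ⊤) (a b : Γ) :
    wordNorm S (a * b) ≤ wordNorm S a + wordNorm S b := by
  obtain ⟨la, h1, h2, h3⟩ := wordNorm_spec S hS a
  obtain ⟨lb, h4, h5, h6⟩ := wordNorm_spec S hS b
  refine Nat.sInf_le ⟨la ++ lb, ?_, ?_, ?_⟩
  · intro x hx; rcases List.mem_append.1 hx with h | h
    · exact h1 x h
    · exact h4 x h
  · simp [h2, h5]
  · simp [h3, h6]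

lemma wordNorm_inv_le (S : Finset Γ) (hS : Subgroup.closure (S : Set Γ) = ⊤) (a : Γ) :
    wordNorm S a⁻¹ ≤ wordNorm S a := by
  obtain ⟨l, h1, h2, h3⟩ := wordNorm_spec S hS a
  refine Nat.sInf_le ⟨(l.map fun p => (p.1, -p.2)).reverse, ?_, ?_, ?_⟩
  · intro x hx
    simp only [List.mem_reverse, List.mem_map] at hx
    obtain ⟨b, hb, rfl⟩ := hx
    exact h1 b hb
  · rw [← h2, List.prod_inv_reverse]; simp [Function.comp_def]
  · rw [← h3]; simp [Function.comp_def, List.sum_reverse]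

/-- Maximal ball engulfing: if `A_i(p)` meets a maximal `j`-th level ball `A_j(q)`
(`i < j`), then `A_i(p)` is contained in the `(1+4/(r-2))`-enlargement of `A_j(q)`. -/
theorem maximal_ball_engulfing (S : Finset Γ) (hS : Subgroup.closure (S : Set Γ) = ⊤)
    (R r n : ℕ) (hR : 2 < R) (hr : 2 < r)
    (X : Set Γ) (hX : X ⊆ wordBall S 1 (R : ℝ))
    (ctr : Γ → ℕ → Γ) (rad : Γ → ℕ → ℝ)
    (hmem : ∀ p ∈ X, ∀ i < n, p ∈ wordBall S (ctr p i) (rad p i))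
    (hsub : ∀ p ∈ X, ∀ i < n, wordBall S (ctr p i) (rad p i) ⊆ wordBall S 1 (R : ℝ))
    (hnest : ∀ p ∈ X, ∀ i, i + 1 < n →
      wordBall S (ctr p i) ((r : ℝ) * rad p i) ⊆ wordBall S (ctr p (i + 1)) (rad p (i + 1)))
    (i j : ℕ) (hij : i < j) (hj : j < n) (p q : Γ) (hp : p ∈ X) (hq : q ∈ X)
    (hmax : ∀ p' ∈ X, wordBall S (ctr q j) (rad q j) ⊆ wordBall S (ctr p' j) (rad p' j) →
      wordBall S (ctr p' j) (rad p' j) = wordBall S (ctr q j) (rad q j))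
    (hinter : (wordBall S (ctr p i) (rad p i) ∩ wordBall S (ctr q j) (rad q j)).Nonempty) :
    wordBall S (ctr p i) (rad p i) ⊆
      wordBall S (ctr q j) ((1 + 4 / ((r : ℝ) - 2)) * rad q j) := by
  have tri : ∀ x y z : Γ, (wordNorm S (x * z⁻¹) : ℝ) ≤
      wordNorm S (x * y⁻¹) + wordNorm S (y * z⁻¹) := by
    intro x y z
    have h : x * z⁻¹ = (x * y⁻¹) * (y * z⁻¹) := by group
    rw [h]
    exact_mod_cast wordNorm_mul_le S hS _ _
  have symm : ∀ x y : Γ, (wordNorm S (x * y⁻¹) : ℝ) ≤ wordNorm S (y * x⁻¹) := by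
    intro x y
    have h : x * y⁻¹ = (y * x⁻¹)⁻¹ := by group
    rw [h]
    exact_mod_cast wordNorm_inv_le S hS _
  have hr2 : (2:ℝ) < r := by exact_mod_cast hr
  obtain ⟨x, hxp, hxq⟩ := hinter
  simp only [wordBall, Set.mem_setOf_eq] at hxp hxq
  have hrp : (0:ℝ) ≤ rad p i := le_trans (Nat.cast_nonneg _) (hmem p hp i (lt_trans hij hj))
  have hrq : (0:ℝ) ≤ rad q j := le_trans (Nat.cast_nonneg _) (hmem q hq j hj)
  have chain : ∀ m k, k + m < n →
      wordBall S (ctr p k) (rad p k) ⊆ wordBall S (ctr p (k + m)) (rad p (k + m)) := by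
    intro m
    induction m with
    | zero => intro k _; simp
    | succ m ih =>
      intro k hk
      have h0 : (0:ℝ) ≤ rad p k := le_trans (Nat.cast_nonneg _) (hmem p hp k (by omega))
      have h1 : wordBall S (ctr p k) (rad p k) ⊆ wordBall S (ctr p (k+1)) (rad p (k+1)) := by
        intro y hy
        refine hnest p hp k (by omega) ?_
        simp only [wordBall, Set.mem_setOf_eq] at hy ⊢
        nlinarith
      have h2 := ih (k+1) (by omega)
      rw [show k + (m+1) = k + 1 + m by omega]
      exact h1.trans h2
  have hfac : (0:ℝ) ≤ 4 / ((r:ℝ) - 2) := div_nonneg (by norm_num) (by linarith)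
  by_cases hc : 2 * rad q j ≤ ((r:ℝ) - 1) * rad p i
  · -- the enlarged ball of A_i(p) swallows A_j(q); use maximality
    have hsubq : wordBall S (ctr q j) (rad q j) ⊆ wordBall S (ctr p i) ((r:ℝ) * rad p i) := by
      intro y hy
      simp only [wordBall, Set.mem_setOf_eq] at hy ⊢
      have t1 := tri (ctr p i) x y
      have t2 := tri x (ctr q j) y
      have t3 := symm x (ctr q j)
      linarith
    have hsub2 : wordBall S (ctr q j) (rad q j) ⊆ wordBall S (ctr p j) (rad p j) := by
      have h1 := hnest p hp i (by omega)
      have h2 := chain (j - (i+1)) (i+1) (by omega)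
      rw [show i + 1 + (j - (i+1)) = j by omega] at h2
      exact (hsubq.trans h1).trans h2
    have heq := hmax p hp hsub2
    intro y hy
    have hy2 : y ∈ wordBall S (ctr p i) ((r:ℝ) * rad p i) := by
      simp only [wordBall, Set.mem_setOf_eq] at hy ⊢
      nlinarith
    have hyj : y ∈ wordBall S (ctr p j) (rad p j) := by
      have h1 := hnest p hp i (by omega)
      have h2 := chain (j - (i+1)) (i+1) (by omega)
      rw [show i + 1 + (j - (i+1)) = j by omega] at h2
      exact h2 (h1 hy2)
    rw [heq] at hyj
    simp only [wordBall, Set.mem_setOf_eq] at hyj ⊢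
    nlinarith [mul_nonneg hfac hrq]
  · -- A_i(p) is small compared to A_j(q)
    push_neg at hc
    intro y hy
    simp only [wordBall, Set.mem_setOf_eq] at hy ⊢
    have t1 := tri (ctr q j) x y
    have t2 := tri x (ctr p i) y
    have t3 := symm x (ctr p i)
    have key : 2 * rad p i ≤ 4 * rad q j / ((r:ℝ) - 2) := by
      rw [le_div_iff₀ (by linarith)]
      nlinarith
    have hexp : (1 + 4 / ((r:ℝ) - 2)) * rad q j = rad q j + 4 * rad q j / ((r:ℝ) - 2) := by
      ring
    rw [hexp]
    linarith
end

section
/- (Effective Vitali covering theorem) Let Γ be a group of polynomial growth of degree d, C ≥ 1 with (1/C)m^d ≤ |B(m)| ≤ Cm^d for all m ∈ ℕ, and c := 3^d C². Let R, n, r > 2 be natural numbers, X ⊆ B(R), and suppose each p ∈ X has associated balls A₁(p),…,A_n(p) with p ∈ A_i(p) ⊆ B(R) and r·A_i(p) ⊆ A_{i+1}(p) for i < n. Set S_i := ⋃_{p∈X} A_i(p). Then there is a pairwise disjoint subcollection 𝒞 of {A_i(p)} such that: (a) the union of (1 + 4/(r−2))-enlargements of balls in 𝒞, together with S_n ∖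 S₁, covers all but at most a ((c−1)/c)^n-fraction of S_n; and (b) the cardinality of the union of the (1 + 4/(r−2))-enlargements of balls in 𝒞 is at least (1 − ((c−1)/c)^n)|S₁|. -/
open Filter MeasureTheory Function Set
open scoped BigOperators

variable {Γ : Type*} [Group Γ]

namespace EVCAux

variable (S : Finset Γ)

lemma rev_prod (l : List (Γ × ℤ)) :
    ((l.map fun p => p.1 ^ p.2).prod)⁻¹
      = ((l.reverse.map fun p : Γ × ℤ => (p.1, -p.2)).map fun p => p.1 ^ p.2).prod := by
  induction l with
  | nil => simp
  | cons a t ih =>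
    simp only [List.map_cons, List.prod_cons, mul_inv_rev, List.reverse_cons,
      List.map_append, List.prod_append, ih]
    simp [zpow_neg]

lemma exists_rep (hS : Subgroup.closure (S : Set Γ) = ⊤) (γ : Γ) :
    ∃ l : List (Γ × ℤ), (∀ p ∈ l, p.1 ∈ S) ∧ (l.map fun p => p.1 ^ p.2).prod = γ := by
  have hγ : γ ∈ Subgroup.closure (S : Set Γ) := by rw [hS]; trivial
  induction hγ using Subgroup.closure_induction with
  | mem x hx => exact ⟨[(x, 1)], by simpa using hx, by simp⟩
  | one => exact ⟨[], by simp, by simp⟩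
  | mul x y _ _ ihx ihy =>
    obtain ⟨l1, h1, e1⟩ := ihx
    obtain ⟨l2, h2, e2⟩ := ihy
    refine ⟨l1 ++ l2, ?_, ?_⟩
    · intro p hp; rcases List.mem_append.1 hp with h | h
      exacts [h1 p h, h2 p h]
    · simp [List.map_append, List.prod_append, e1, e2]
  | inv x _ ihx =>
    obtain ⟨l, h, e⟩ := ihx
    refine ⟨l.reverse.map fun p => (p.1, -p.2), ?_, ?_⟩
    · intro p hp
      simp only [List.mem_map, List.mem_reverse] at hp
      obtain ⟨q, hq, rfl⟩ := hp
      exact h q hq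
    · rw [← rev_prod, e]

lemma normSet_nonempty (hS : Subgroup.closure (S : Set Γ) = ⊤) (γ : Γ) :
    {n | ∃ l : List (Γ × ℤ), (∀ p ∈ l, p.1 ∈ S) ∧
      (l.map fun p => p.1 ^ p.2).prod = γ ∧ (l.map fun p => p.2.natAbs).sum = n}.Nonempty := by
  obtain ⟨l, h1, h2⟩ := exists_rep S hS γ
  exact ⟨(l.map fun p => p.2.natAbs).sum, l, h1, h2, rfl⟩

lemma wordNorm_le (γ : Γ) (l : List (Γ × ℤ)) (h1 : ∀ p ∈ l, p.1 ∈ S)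
    (h2 : (l.map fun p => p.1 ^ p.2).prod = γ) :
    wordNorm S γ ≤ (l.map fun p => p.2.natAbs).sum :=
  Nat.sInf_le ⟨l, h1, h2, rfl⟩

lemma wordNorm_spec (hS : Subgroup.closure (S : Set Γ) = ⊤) (γ : Γ) :
    ∃ l : List (Γ × ℤ), (∀ p ∈ l, p.1 ∈ S) ∧
      (l.map fun p => p.1 ^ p.2).prod = γ ∧ (l.map fun p => p.2.natAbs).sum = wordNorm S γ :=
  Nat.sInf_mem (normSet_nonempty S hS γ)

lemma wordNorm_one : wordNorm S 1 = 0 :=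
  Nat.le_zero.1 (wordNorm_le S 1 [] (by simp) (by simp))

lemma wordNorm_mul_le (hS : Subgroup.closure (S : Set Γ) = ⊤) (g h : Γ) :
    wordNorm S (g * h) ≤ wordNorm S g + wordNorm S h := by
  obtain ⟨l1, a1, b1, c1⟩ := wordNorm_spec S hS g
  obtain ⟨l2, a2, b2, c2⟩ := wordNorm_spec S hS h
  have := wordNorm_le S (g * h) (l1 ++ l2) ?_ ?_
  · rwa [List.map_append, List.sum_append, c1, c2] at this
  · intro p hp; rcases List.mem_append.1 hp with h | h
    exacts [a1 p h, a2 p h]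
  · simp [List.map_append, List.prod_append, b1, b2]

lemma wordNorm_inv_le (hS : Subgroup.closure (S : Set Γ) = ⊤) (g : Γ) :
    wordNorm S g⁻¹ ≤ wordNorm S g := by
  obtain ⟨l, a, b, c⟩ := wordNorm_spec S hS g
  have := wordNorm_le S g⁻¹ (l.reverse.map fun p => (p.1, -p.2)) ?_ ?_
  · refine this.trans ?_
    rw [← c]
    apply le_of_eq
    rw [List.map_map]
    simp only [Function.comp_def, Int.natAbs_neg]
    rw [List.map_reverse, List.sum_reverse]
  · intro p hp
    simp only [List.mem_map, List.mem_reverse] at hp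
    obtain ⟨q, hq, rfl⟩ := hp
    exact a q hq
  · rw [← rev_prod, b]

lemma wordNorm_inv (hS : Subgroup.closure (S : Set Γ) = ⊤) (g : Γ) :
    wordNorm S g⁻¹ = wordNorm S g := by
  refine le_antisymm (wordNorm_inv_le S hS g) ?_
  have := wordNorm_inv_le S hS g⁻¹
  simpa using this

lemma eq_one_of_wordNorm_zero (hS : Subgroup.closure (S : Set Γ) = ⊤) (g : Γ)
    (h : wordNorm S g = 0) : g = 1 := by
  obtain ⟨l, _, b, c⟩ := wordNorm_spec S hS g
  rw [h] at c
  have : ∀ p ∈ l, p.1 ^ p.2 = 1 := by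
    intro p hp
    have h0 : p.2.natAbs = 0 := by
      have := List.sum_eq_zero_iff.1 c
      exact this _ (List.mem_map.2 ⟨p, hp, rfl⟩)
    have : p.2 = 0 := Int.natAbs_eq_zero.1 h0
    simp [this]
  rw [← b]
  exact List.prod_eq_one (by
    intro x hx
    obtain ⟨p, hp, rfl⟩ := List.mem_map.1 hx
    exact this p hp)

/-- distance form: `dd x y = wordNorm S (x * y⁻¹)` -/
noncomputable abbrev dd (x y : Γ) : ℕ := wordNorm S (x * y⁻¹)

lemma dd_self (x : Γ) : dd S x x = 0 := by simp [dd, wordNorm_one]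

lemma dd_comm (hS : Subgroup.closure (S : Set Γ) = ⊤) (x y : Γ) :
    dd S x y = dd S y x := by
  have : (x * y⁻¹)⁻¹ = y * x⁻¹ := by group
  rw [dd, ← wordNorm_inv S hS (x * y⁻¹), this]

lemma dd_triangle (hS : Subgroup.closure (S : Set Γ) = ⊤) (x y z : Γ) :
    dd S x z ≤ dd S x y + dd S y z := by
  have : x * z⁻¹ = (x * y⁻¹) * (y * z⁻¹) := by group
  rw [dd, this]
  exact wordNorm_mul_le S hS _ _

lemma mem_wordBall {x y : Γ} {s : ℝ} : y ∈ wordBall S x s ↔ (dd S x y : ℝ) ≤ s := Iff.rfl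

lemma self_mem_wordBall {x : Γ} {s : ℝ} (hs : 0 ≤ s) : x ∈ wordBall S x s := by
  rw [mem_wordBall, dd_self]; simpa

lemma wordBall_mono {x : Γ} {s t : ℝ} (h : s ≤ t) : wordBall S x s ⊆ wordBall S x t :=
  fun y hy => le_trans hy h

end EVCAux

namespace EVCAux

variable (S : Finset Γ)

lemma wordBall_eq_image (x : Γ) (s : ℝ) :
    wordBall S x s = (fun z => z * x) '' wordBall S 1 s := by
  ext y
  constructor
  · intro hy
    refine ⟨y * x⁻¹, ?_, by group⟩
    have h1 : (1:Γ) * (y * x⁻¹)⁻¹ = x * y⁻¹ := by group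
    show (wordNorm S ((1:Γ) * (y * x⁻¹)⁻¹) : ℝ) ≤ s
    rw [h1]; exact hy
  · rintro ⟨z, hz, rfl⟩
    show (wordNorm S (x * (z * x)⁻¹) : ℝ) ≤ s
    have h1 : x * (z * x)⁻¹ = 1 * z⁻¹ := by group
    rw [h1]; exact hz

lemma ncard_wordBall_eq (x : Γ) (s : ℝ) :
    (wordBall S x s).ncard = (wordBall S 1 s).ncard := by
  rw [wordBall_eq_image S x s]
  exact Set.ncard_image_of_injective _ (mul_left_injective x)

lemma wordBall_empty_of_neg (x : Γ) {s : ℝ} (hs : s < 0) : wordBall S x s = ∅ := by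
  ext y
  simp only [Set.mem_empty_iff_false, iff_false]
  intro hy
  have : (0:ℝ) ≤ (wordNorm S (x * y⁻¹) : ℝ) := by positivity
  have := hy
  rw [mem_wordBall] at this
  linarith

lemma wordBall_finite {d : ℕ} {C : ℝ} (hC : 1 ≤ C)
    (hgr : ∀ m : ℕ, 1 ≤ m →
      (1 / C) * (m : ℝ) ^ d ≤ ((wordBall S 1 (m : ℝ)).ncard : ℝ) ∧
      ((wordBall S 1 (m : ℝ)).ncard : ℝ) ≤ C * (m : ℝ) ^ d)
    (x : Γ) (s : ℝ) : (wordBall S x s).Finite := by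
  rw [wordBall_eq_image S x s]
  apply Set.Finite.image
  rcases lt_or_ge s 0 with h | h
  · rw [wordBall_empty_of_neg S 1 h]; exact Set.finite_empty
  · have hsub : wordBall S 1 s ⊆ wordBall S 1 ((⌈s⌉₊ + 1 : ℕ) : ℝ) := by
      apply wordBall_mono
      push_cast
      have := Nat.le_ceil s
      linarith
    refine Set.Finite.subset ?_ hsub
    by_contra hinf
    have h0 : (wordBall S 1 ((⌈s⌉₊ + 1 : ℕ) : ℝ)).ncard = 0 :=
      Set.Infinite.ncard hinf
    have := (hgr (⌈s⌉₊ + 1) (by omega)).1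
    rw [h0] at this
    have hC0 : (0:ℝ) < C := by linarith
    have hm : (0:ℝ) < ((⌈s⌉₊ + 1 : ℕ) : ℝ) ^ d := by positivity
    have : (0:ℝ) < 1 / C * ((⌈s⌉₊ + 1 : ℕ) : ℝ) ^ d := by positivity
    simp only [Nat.cast_zero] at *
    linarith

lemma wordBall_eq_floor (x : Γ) {s : ℝ} (hs : 0 ≤ s) :
    wordBall S x s = wordBall S x ((⌊s⌋₊ : ℕ) : ℝ) := by
  ext y
  rw [mem_wordBall, mem_wordBall, Nat.cast_le]
  exact (Nat.le_floor_iff hs).symm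

lemma wordBall_one_zero (hS : Subgroup.closure (S : Set Γ) = ⊤) (x : Γ) :
    wordBall S x (0:ℝ) = {x} := by
  ext y
  simp only [Set.mem_singleton_iff, mem_wordBall]
  constructor
  · intro h
    have h0 : wordNorm S (x * y⁻¹) = 0 := by exact_mod_cast le_antisymm (by exact_mod_cast h) (by positivity)
    have h1 := eq_one_of_wordNorm_zero S hS _ h0
    exact (mul_inv_eq_one.1 h1).symm
  · rintro rfl
    rw [dd_self]; simp

end EVCAux

namespace EVCAux

variable (S : Finset Γ)

lemma doubling (hS : Subgroup.closure (S : Set Γ) = ⊤) {d : ℕ} {C : ℝ} (hC : 1 ≤ C)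
    (hgr : ∀ m : ℕ, 1 ≤ m →
      (1 / C) * (m : ℝ) ^ d ≤ ((wordBall S 1 (m : ℝ)).ncard : ℝ) ∧
      ((wordBall S 1 (m : ℝ)).ncard : ℝ) ≤ C * (m : ℝ) ^ d)
    (x : Γ) (m : ℕ) :
    ((wordBall S x ((3 * m : ℕ) : ℝ)).ncard : ℝ)
      ≤ 3 ^ d * C ^ 2 * ((wordBall S x ((m : ℕ) : ℝ)).ncard : ℝ) := by
  rw [ncard_wordBall_eq S x, ncard_wordBall_eq S x]
  have hC0 : (0:ℝ) < C := by linarith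
  have hc1 : (1:ℝ) ≤ 3 ^ d * C ^ 2 := by
    have h3 : (1:ℝ) ≤ 3 ^ d := one_le_pow₀ (by norm_num)
    nlinarith
  rcases Nat.eq_zero_or_pos m with rfl | hm
  · simp only [Nat.mul_zero, Nat.cast_zero]
    have h0 : (0:ℝ) ≤ ((wordBall S 1 (0:ℝ)).ncard : ℝ) := Nat.cast_nonneg _
    nlinarith
  · have h1 := (hgr m hm).1
    have h2 := (hgr (3 * m) (by omega)).2
    have hmd : (0:ℝ) < (m:ℝ) ^ d := by positivity
    have key : ((m:ℝ)) ^ d ≤ C * ((wordBall S 1 ((m:ℕ):ℝ)).ncard : ℝ) := by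
      have := mul_le_mul_of_nonneg_left h1 (le_of_lt hC0)
      rw [← mul_assoc] at this
      rw [mul_one_div, div_self (ne_of_gt hC0), one_mul] at this
      exact this
    have h3m : ((3 * m : ℕ) : ℝ) ^ d = 3 ^ d * (m:ℝ) ^ d := by
      push_cast
      rw [mul_pow]
    calc ((wordBall S 1 ((3 * m : ℕ) : ℝ)).ncard : ℝ)
        ≤ C * ((3 * m : ℕ) : ℝ) ^ d := h2
      _ = C * (3 ^ d * (m:ℝ) ^ d) := by rw [h3m]
      _ ≤ C * (3 ^ d * (C * ((wordBall S 1 ((m:ℕ):ℝ)).ncard : ℝ))) := by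
          apply mul_le_mul_of_nonneg_left _ (le_of_lt hC0)
          apply mul_le_mul_of_nonneg_left key (by positivity)
      _ = 3 ^ d * C ^ 2 * ((wordBall S 1 ((m:ℕ):ℝ)).ncard : ℝ) := by ring

lemma ncard_biUnion_le {α : Type*} (D : Finset α) (f : α → Set Γ)
    (hf : ∀ a ∈ D, (f a).Finite) :
    (⋃ a ∈ D, f a).ncard ≤ ∑ a ∈ D, (f a).ncard := by
  classical
  induction D using Finset.induction_on with
  | empty => simp
  | @insert a D ha ih =>
    rw [Finset.sum_insert ha]
    have : (⋃ b ∈ insert a D, f b) = f a ∪ ⋃ b ∈ D, f b := by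
      simp [Set.biUnion_insert]
    rw [this]
    refine le_trans (Set.ncard_union_le _ _) ?_
    have := ih (fun b hb => hf b (Finset.mem_insert_of_mem hb))
    omega

lemma ncard_biUnion_eq {α : Type*} (D : Finset α) (f : α → Set Γ)
    (hf : ∀ a ∈ D, (f a).Finite)
    (hdisj : ∀ a ∈ D, ∀ b ∈ D, a ≠ b → Disjoint (f a) (f b)) :
    (⋃ a ∈ D, f a).ncard = ∑ a ∈ D, (f a).ncard := by
  classical
  induction D using Finset.induction_on with
  | empty => simp
  | @insert a D ha ih =>
    rw [Finset.sum_insert ha]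
    have hunion : (⋃ b ∈ insert a D, f b) = f a ∪ ⋃ b ∈ D, f b := by
      simp [Set.biUnion_insert]
    rw [hunion]
    have hfinU : (⋃ b ∈ D, f b).Finite :=
      Set.Finite.biUnion D.finite_toSet (fun b hb => hf b (Finset.mem_insert_of_mem hb))
    have hdisjU : Disjoint (f a) (⋃ b ∈ D, f b) := by
      rw [Set.disjoint_iUnion₂_right]
      intro b hb
      exact hdisj a (Finset.mem_insert_self a D) b (Finset.mem_insert_of_mem hb)
        (by rintro rfl; exact ha hb)
    rw [Set.ncard_union_eq hdisjU (hf a (Finset.mem_insert_self a D)) hfinU]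
    rw [ih (fun b hb => hf b (Finset.mem_insert_of_mem hb))
      (fun b hb c hc hbc => hdisj b (Finset.mem_insert_of_mem hb) c (Finset.mem_insert_of_mem hc) hbc)]

end EVCAux

namespace EVCAux

open scoped Classical in
noncomputable def greedy (ball : Γ → Set Γ) (δ : Γ → ℝ) (T : Finset Γ) : Finset Γ :=
  if h : T.Nonempty then
    insert (Classical.choose (T.exists_max_image δ h))
      (greedy ball δ ((T.erase (Classical.choose (T.exists_max_image δ h))).filter
        fun a => Disjoint (ball a) (ball (Classical.choose (T.exists_max_image δ h)))))
  else ∅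
termination_by T.card
decreasing_by
  have hb : (Classical.choose (T.exists_max_image δ h)) ∈ T :=
    (Classical.choose_spec (T.exists_max_image δ h)).1
  calc ((T.erase (Classical.choose (T.exists_max_image δ h))).filter _).card
      ≤ (T.erase (Classical.choose (T.exists_max_image δ h))).card := Finset.card_filter_le _ _
    _ < T.card := Finset.card_erase_lt_of_mem hb

lemma greedy_subset (ball : Γ → Set Γ) (δ : Γ → ℝ) : ∀ T : Finset Γ, greedy ball δ T ⊆ T := by
  classical
  intro T
  induction T using Finset.strongInductionOn with
  | _ T ih =>
    rw [greedy]
    split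
    · next h =>
      set b := Classical.choose (T.exists_max_image δ h) with hbdef
      have hb : b ∈ T := (Classical.choose_spec (T.exists_max_image δ h)).1
      have hsub : ((T.erase b).filter fun a => Disjoint (ball a) (ball b)) ⊂ T :=
        lt_of_le_of_lt (Finset.filter_subset _ _) (Finset.erase_ssubset hb)
      intro x hx
      rcases Finset.mem_insert.1 hx with rfl | hx
      · exact hb
      · exact (hsub.1 (ih _ hsub hx))
    · simp

lemma greedy_pairwise (ball : Γ → Set Γ) (δ : Γ → ℝ) :
    ∀ T : Finset Γ, ∀ a ∈ greedy ball δ T, ∀ b ∈ greedy ball δ T, a ≠ b →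
      Disjoint (ball a) (ball b) := by
  classical
  intro T
  induction T using Finset.strongInductionOn with
  | _ T ih =>
    rw [greedy]
    split
    · next h =>
      set c := Classical.choose (T.exists_max_image δ h) with hcdef
      have hc : c ∈ T := (Classical.choose_spec (T.exists_max_image δ h)).1
      set T' := (T.erase c).filter fun a => Disjoint (ball a) (ball c) with hT'
      have hsub : T' ⊂ T := lt_of_le_of_lt (Finset.filter_subset _ _) (Finset.erase_ssubset hc)
      intro a ha b hb hab
      rcases Finset.mem_insert.1 ha with rfl | ha
      · rcases Finset.mem_insert.1 hb with rfl | hb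
        · exact absurd rfl hab
        · have := greedy_subset ball δ T' hb
          exact (Finset.mem_filter.1 this).2.symm
      · rcases Finset.mem_insert.1 hb with rfl | hb
        · have := greedy_subset ball δ T' ha
          exact (Finset.mem_filter.1 this).2
        · exact ih T' hsub a ha b hb hab
    · simp

lemma greedy_cover (ball : Γ → Set Γ) (δ : Γ → ℝ) :
    ∀ T : Finset Γ, ∀ a ∈ T, (ball a).Nonempty →
      ∃ b ∈ greedy ball δ T, ((ball a) ∩ (ball b)).Nonempty ∧ δ a ≤ δ b := by
  classical
  intro T
  induction T using Finset.strongInductionOn with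
  | _ T ih =>
    intro a ha hne
    rw [greedy]
    have h : T.Nonempty := ⟨a, ha⟩
    rw [dif_pos h]
    set c := Classical.choose (T.exists_max_image δ h) with hcdef
    obtain ⟨hc, hmax⟩ := Classical.choose_spec (T.exists_max_image δ h)
    set T' := (T.erase c).filter fun a => Disjoint (ball a) (ball c) with hT'
    have hsub : T' ⊂ T := lt_of_le_of_lt (Finset.filter_subset _ _) (Finset.erase_ssubset hc)
    by_cases hmem : a ∈ T'
    · obtain ⟨b, hb, hint, hδ⟩ := ih T' hsub a hmem hne
      exact ⟨b, Finset.mem_insert_of_mem hb, hint, hδ⟩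
    · refine ⟨c, Finset.mem_insert_self _ _, ?_, hmax a ha⟩
      by_cases hac : a = c
      · subst hac
        simpa [Set.inter_self] using hne
      · have : ¬ Disjoint (ball a) (ball c) := by
          intro hd
          exact hmem (Finset.mem_filter.2 ⟨Finset.mem_erase.2 ⟨hac, ha⟩, hd⟩)
        exact Set.not_disjoint_iff_nonempty_inter.1 this

end EVCAux

namespace EVCAux

open scoped Classical

section Main

variable (S : Finset Γ) (ctr : Γ → ℕ → Γ) (rad : Γ → ℕ → ℝ) (n r : ℕ)

/-- the ball of `p` at level `i` -/
def bal (p : Γ) (i : ℕ) : Set Γ := wordBall S (ctr p i) (rad p i)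

/-- the `(1+4/(r-2))`-enlargement of the ball of `p` at level `i` -/
def enl (p : Γ) (i : ℕ) : Set Γ :=
  wordBall S (ctr p i) ((1 + 4 / ((r : ℝ) - 2)) * rad p i)

/-- active sets: round `k` selects at level `n-1-k`. -/
noncomputable def chA (X0 : Finset Γ) : ℕ → Finset Γ
  | 0 => X0
  | (k+1) =>
    let Ak := chA X0 k
    let Vk := Ak.filter (fun q => ∀ p ∈ Ak, k + 1 < n →
      ((bal S ctr rad p (n-2-k)) ∩ (bal S ctr rad q (n-1-k))).Nonempty →
        bal S ctr rad p (n-2-k) ⊆ enl S ctr rad r q (n-1-k))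
    let Dk := greedy (fun q => bal S ctr rad q (n-1-k)) (fun q => rad q (n-1-k)) Vk
    Ak.filter (fun p => ∀ q ∈ Dk, Disjoint (bal S ctr rad p (n-2-k)) (bal S ctr rad q (n-1-k)))

noncomputable def chV (X0 : Finset Γ) (k : ℕ) : Finset Γ :=
  (chA S ctr rad n r X0 k).filter (fun q => ∀ p ∈ chA S ctr rad n r X0 k, k + 1 < n →
      ((bal S ctr rad p (n-2-k)) ∩ (bal S ctr rad q (n-1-k))).Nonempty →
        bal S ctr rad p (n-2-k) ⊆ enl S ctr rad r q (n-1-k))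

noncomputable def chD (X0 : Finset Γ) (k : ℕ) : Finset Γ :=
  greedy (fun q => bal S ctr rad q (n-1-k)) (fun q => rad q (n-1-k)) (chV S ctr rad n r X0 k)

lemma chA_succ (X0 : Finset Γ) (k : ℕ) :
    chA S ctr rad n r X0 (k+1) = (chA S ctr rad n r X0 k).filter
      (fun p => ∀ q ∈ chD S ctr rad n r X0 k,
        Disjoint (bal S ctr rad p (n-2-k)) (bal S ctr rad q (n-1-k))) := by
  rfl

lemma chD_subset (X0 : Finset Γ) (k : ℕ) :
    chD S ctr rad n r X0 k ⊆ chA S ctr rad n r X0 k :=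
  fun q hq => Finset.mem_filter.1 (greedy_subset _ _ _ hq) |>.1

lemma chA_succ_subset (X0 : Finset Γ) (k : ℕ) :
    chA S ctr rad n r X0 (k+1) ⊆ chA S ctr rad n r X0 k := by
  rw [chA_succ]; exact Finset.filter_subset _ _

lemma chA_le (X0 : Finset Γ) {j k : ℕ} (h : j ≤ k) :
    chA S ctr rad n r X0 k ⊆ chA S ctr rad n r X0 j := by
  induction k with
  | zero => simp_all
  | succ k ih =>
    rcases Nat.eq_or_lt_of_le h with rfl | h'
    · exact Finset.Subset.refl _
    · exact (chA_succ_subset S ctr rad n r X0 k).trans (ih (by omega))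

lemma chA_subset_X0 (X0 : Finset Γ) (k : ℕ) : chA S ctr rad n r X0 k ⊆ X0 :=
  chA_le S ctr rad n r X0 (Nat.zero_le k)

end Main

end EVCAux

namespace EVCAux

open scoped Classical

section Geo

variable (S : Finset Γ) (hS : Subgroup.closure (S : Set Γ) = ⊤)
variable (ctr : Γ → ℕ → Γ) (rad : Γ → ℕ → ℝ) (n r : ℕ) (hr : 2 < r)
variable (X : Set Γ)
variable (hmem : ∀ p ∈ X, ∀ i < n, p ∈ wordBall S (ctr p i) (rad p i))
variable (hnest : ∀ p ∈ X, ∀ i, i + 1 < n →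
      wordBall S (ctr p i) ((r : ℝ) * rad p i) ⊆ wordBall S (ctr p (i + 1)) (rad p (i + 1)))

include hS hr hmem hnest

lemma rad_nonneg {p : Γ} (hp : p ∈ X) {i : ℕ} (hi : i < n) : 0 ≤ rad p i := by
  have h := hmem p hp i hi
  rw [mem_wordBall] at h
  exact le_trans (by positivity) h

lemma mem_bal_self {p : Γ} (hp : p ∈ X) {i : ℕ} (hi : i < n) : p ∈ bal S ctr rad p i :=
  hmem p hp i hi

lemma bal_mono {p : Γ} (hp : p ∈ X) {i j : ℕ} (hij : i ≤ j) (hj : j < n) :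
    bal S ctr rad p i ⊆ bal S ctr rad p j := by
  induction j, hij using Nat.le_induction with
  | base => exact subset_rfl
  | succ j hij ih =>
    refine (ih (by omega)).trans ?_
    have h1 : bal S ctr rad p j ⊆ wordBall S (ctr p j) ((r : ℝ) * rad p j) := by
      apply wordBall_mono
      have h0 : 0 ≤ rad p j := rad_nonneg S hS ctr rad n r hr X hmem hnest hp (by omega)
      have hr1 : (1 : ℝ) ≤ (r : ℝ) := by
        have : (3 : ℝ) ≤ (r : ℝ) := by exact_mod_cast hr
        linarith
      nlinarith
    exact h1.trans (hnest p hp j hj)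

lemma cross_disjoint (X0 : Finset Γ) (hX0 : ∀ p ∈ X0, p ∈ X) {j k : ℕ} (hjk : j < k)
    (hk : k < n) {p q : Γ} (hp : p ∈ chA S ctr rad n r X0 k)
    (hq : q ∈ chD S ctr rad n r X0 j) :
    Disjoint (bal S ctr rad p (n-1-k)) (bal S ctr rad q (n-1-j)) := by
  have hp' : p ∈ chA S ctr rad n r X0 (j+1) := chA_le S ctr rad n r X0 (by omega) hp
  rw [chA_succ] at hp'
  have hfilter := (Finset.mem_filter.1 hp').2 q hq
  refine Disjoint.mono_left ?_ hfilter
  exact bal_mono S hS ctr rad n r hr X hmem hnest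
    (hX0 p (chA_subset_X0 S ctr rad n r X0 k hp)) (by omega) (by omega)

lemma veto_absorb {k : ℕ} (hk1 : k + 1 < n) {p' q : Γ} (hp' : p' ∈ X) (hq : q ∈ X)
    (hint : ((bal S ctr rad p' (n-2-k)) ∩ (bal S ctr rad q (n-1-k))).Nonempty)
    (hnsub : ¬ bal S ctr rad p' (n-2-k) ⊆ enl S ctr rad r q (n-1-k)) :
    bal S ctr rad q (n-1-k) ⊆ bal S ctr rad p' (n-1-k) := by
  obtain ⟨w, hw, hwn⟩ := Set.not_subset.1 hnsub
  obtain ⟨z, hz1, hz2⟩ := hint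
  set lo := n - 2 - k with hlo
  set hi := n - 1 - k with hhi
  have hlohi : lo + 1 = hi := by omega
  have hhin : hi < n := by omega
  have hlon : lo < n := by omega
  set c' := ctr p' lo
  set ρ' := rad p' lo with hρ'
  set y := ctr q hi
  set t := rad q hi with ht
  have hρ0 : 0 ≤ ρ' := rad_nonneg S hS ctr rad n r hr X hmem hnest hp' hlon
  have ht0 : 0 ≤ t := rad_nonneg S hS ctr rad n r hr X hmem hnest hq hhin
  have hr2 : (0:ℝ) < (r : ℝ) - 2 := by
    have : (3 : ℝ) ≤ (r : ℝ) := by exact_mod_cast hr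
    linarith
  -- real distance facts
  have hz1' : (dd S c' z : ℝ) ≤ ρ' := hz1
  have hz2' : (dd S y z : ℝ) ≤ t := hz2
  have hw' : (dd S c' w : ℝ) ≤ ρ' := hw
  have hwn' : (1 + 4 / ((r : ℝ) - 2)) * t < (dd S y w : ℝ) := by
    rw [enl, mem_wordBall] at hwn
    push_neg at hwn
    exact hwn
  -- lower bound on dd y c'
  have tri1 : dd S y w ≤ dd S y c' + dd S c' w := dd_triangle S hS y c' w
  have tri2 : dd S y c' ≤ dd S y z + dd S c' z := by
    have := dd_triangle S hS y z c'
    rwa [dd_comm S hS z c'] at this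
  have key : 2 * t < ((r : ℝ) - 2) * ρ' := by
    have h1 : (dd S y w : ℝ) ≤ (dd S y c' : ℝ) + ρ' := by
      have := tri1
      have hcast : (dd S y w : ℝ) ≤ (dd S y c' : ℝ) + (dd S c' w : ℝ) := by exact_mod_cast this
      linarith
    have h2 : (dd S y c' : ℝ) ≤ t + ρ' := by
      have hcast : (dd S y c' : ℝ) ≤ (dd S y z : ℝ) + (dd S c' z : ℝ) := by exact_mod_cast tri2
      linarith
    have h3 : (1 + 4 / ((r : ℝ) - 2)) * t < t + 2 * ρ' := by linarith
    have h4 : 4 / ((r : ℝ) - 2) * t < 2 * ρ' := by linarith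
    have h5 : 4 * t < 2 * ρ' * ((r : ℝ) - 2) := by
      have heq : 4 / ((r : ℝ) - 2) * t = 4 * t / ((r : ℝ) - 2) := by ring
      rw [heq, div_lt_iff₀ hr2] at h4
      linarith
    linarith
  -- swallow
  intro u hu
  have hu' : (dd S y u : ℝ) ≤ t := hu
  have tri3 : dd S c' u ≤ dd S c' z + (dd S y z + dd S y u) := by
    have t1 := dd_triangle S hS c' z u
    have t2 := dd_triangle S hS z y u
    have t3 : dd S z y = dd S y z := dd_comm S hS z y
    omega
  have hmem' : u ∈ wordBall S c' ((r : ℝ) * ρ') := by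
    rw [mem_wordBall]
    have hcast : (dd S c' u : ℝ) ≤ (dd S c' z : ℝ) + ((dd S y z : ℝ) + (dd S y u : ℝ)) := by
      exact_mod_cast tri3
    have : (dd S c' u : ℝ) ≤ ρ' + 2 * t := by linarith
    nlinarith
  have := hnest p' hp' lo (by omega)
  rw [hlohi] at this
  exact this hmem'

variable (d : ℕ) (C : ℝ) (hC : 1 ≤ C)
variable (hgr : ∀ m : ℕ, 1 ≤ m →
      (1 / C) * (m : ℝ) ^ d ≤ ((wordBall S 1 (m : ℝ)).ncard : ℝ) ∧
      ((wordBall S 1 (m : ℝ)).ncard : ℝ) ≤ C * (m : ℝ) ^ d)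

include hC hgr

lemma bal_finite {p : Γ} {i : ℕ} : (bal S ctr rad p i).Finite :=
  wordBall_finite S hC hgr _ _

lemma three_cover (X0 : Finset Γ) (hX0 : ∀ p ∈ X0, p ∈ X) {k : ℕ} (hk : k < n) {w : Γ}
    (hw : w ∈ ⋃ p ∈ chA S ctr rad n r X0 k, bal S ctr rad p (n-1-k)) :
    ∃ q ∈ chD S ctr rad n r X0 k,
      w ∈ wordBall S (ctr q (n-1-k)) (((3 * ⌊rad q (n-1-k)⌋₊ : ℕ)) : ℝ) := by
  simp only [Set.mem_iUnion] at hw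
  obtain ⟨p₀, hp₀, hwp₀⟩ := hw
  set hi := n - 1 - k with hhi
  have hhin : hi < n := by omega
  set Pfam := (chA S ctr rad n r X0 k).filter (fun p => w ∈ bal S ctr rad p hi) with hPfam
  have hne : Pfam.Nonempty := ⟨p₀, Finset.mem_filter.2 ⟨hp₀, hwp₀⟩⟩
  obtain ⟨ps, hps, hmax⟩ := Pfam.exists_max_image (fun p => (bal S ctr rad p hi).ncard) hne
  have hpsA : ps ∈ chA S ctr rad n r X0 k := (Finset.mem_filter.1 hps).1
  have hpsX : ps ∈ X := hX0 ps (chA_subset_X0 S ctr rad n r X0 k hpsA)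
  have hwps : w ∈ bal S ctr rad ps hi := (Finset.mem_filter.1 hps).2
  have hV : ps ∈ chV S ctr rad n r X0 k := by
    rw [chV, Finset.mem_filter]
    refine ⟨hpsA, ?_⟩
    intro p' hp' hk1 hint
    by_contra hnsub
    have hp'X : p' ∈ X := hX0 p' (chA_subset_X0 S ctr rad n r X0 k hp')
    have habs : bal S ctr rad ps hi ⊆ bal S ctr rad p' hi :=
      veto_absorb S hS ctr rad n r hr X hmem hnest hk1 hp'X hpsX hint hnsub
    have hp'P : p' ∈ Pfam := Finset.mem_filter.2 ⟨hp', habs hwps⟩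
    have hle := hmax p' hp'P
    have heq : bal S ctr rad ps hi = bal S ctr rad p' hi :=
      Set.eq_of_subset_of_ncard_le habs hle (wordBall_finite S hC hgr _ _)
    apply hnsub
    have hsub1 : bal S ctr rad p' (n-2-k) ⊆ bal S ctr rad p' hi :=
      bal_mono S hS ctr rad n r hr X hmem hnest hp'X (by omega) hhin
    have hsub2 : bal S ctr rad ps hi ⊆ enl S ctr rad r ps hi := by
      apply wordBall_mono
      have h0 : 0 ≤ rad ps hi := rad_nonneg S hS ctr rad n r hr X hmem hnest hpsX hhin
      have hr2 : (0:ℝ) < (r : ℝ) - 2 := by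
        have : (3 : ℝ) ≤ (r : ℝ) := by exact_mod_cast hr
        linarith
      have : (0:ℝ) ≤ 4 / ((r : ℝ) - 2) := by positivity
      nlinarith
    rw [heq] at hsub2
    exact hsub1.trans hsub2
  obtain ⟨q, hq, hint, hδ⟩ := greedy_cover (fun q => bal S ctr rad q hi)
    (fun q => rad q hi) (chV S ctr rad n r X0 k) ps hV
    ⟨ps, mem_bal_self S hS ctr rad n r hr X hmem hnest hpsX hhin⟩
  refine ⟨q, hq, ?_⟩
  obtain ⟨z, hz1, hz2⟩ := hint
  have hqX : q ∈ X := hX0 q (chA_subset_X0 S ctr rad n r X0 k (chD_subset S ctr rad n r X0 k hq))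
  have htq0 : 0 ≤ rad q hi := rad_nonneg S hS ctr rad n r hr X hmem hnest hqX hhin
  have hts0 : 0 ≤ rad ps hi := rad_nonneg S hS ctr rad n r hr X hmem hnest hpsX hhin
  set a := ⌊rad ps hi⌋₊ with ha
  set b := ⌊rad q hi⌋₊ with hb
  have hab : a ≤ b := Nat.floor_le_floor hδ
  have h1 : dd S (ctr q hi) z ≤ b := Nat.le_floor hz2
  have h2 : dd S (ctr ps hi) z ≤ a := Nat.le_floor hz1
  have h3 : dd S (ctr ps hi) w ≤ a := Nat.le_floor hwps
  have tri : dd S (ctr q hi) w ≤ dd S (ctr q hi) z + (dd S (ctr ps hi) z + dd S (ctr ps hi) w) := by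
    have t1 := dd_triangle S hS (ctr q hi) z w
    have t2 := dd_triangle S hS z (ctr ps hi) w
    have t3 : dd S z (ctr ps hi) = dd S (ctr ps hi) z := dd_comm S hS _ _
    omega
  have : dd S (ctr q hi) w ≤ 3 * b := by omega
  rw [mem_wordBall]
  exact_mod_cast this

lemma drop_covered (X0 : Finset Γ) {k : ℕ} (hk1 : k + 1 < n) {p₀ : Γ}
    (hp₀ : p₀ ∈ chA S ctr rad n r X0 k) (hnd : p₀ ∉ chA S ctr rad n r X0 (k+1)) :
    ∃ q ∈ chD S ctr rad n r X0 k,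
      bal S ctr rad p₀ (n-2-k) ⊆ enl S ctr rad r q (n-1-k) := by
  rw [chA_succ, Finset.mem_filter] at hnd
  push_neg at hnd
  obtain ⟨q, hq, hndisj⟩ := hnd hp₀
  refine ⟨q, hq, ?_⟩
  have hqV : q ∈ chV S ctr rad n r X0 k := greedy_subset _ _ _ hq
  have hveto := (Finset.mem_filter.1 hqV).2 p₀ hp₀ hk1
  exact hveto (Set.not_disjoint_iff_nonempty_inter.1 hndisj)

end Geo

end EVCAux

open EVCAux

/-- Effective Vitali covering theorem for groups of polynomial growth. -/
theorem effective_vitali_covering (S : Finset Γ) (hS : Subgroup.closure (S : Set Γ) = ⊤)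
    (d : ℕ) (C : ℝ) (hC : 1 ≤ C)
    (hgr : ∀ m : ℕ, 1 ≤ m →
      (1 / C) * (m : ℝ) ^ d ≤ ((wordBall S 1 (m : ℝ)).ncard : ℝ) ∧
      ((wordBall S 1 (m : ℝ)).ncard : ℝ) ≤ C * (m : ℝ) ^ d)
    (R n r : ℕ) (hR : 2 < R) (hn : 2 < n) (hr : 2 < r)
    (X : Set Γ) (hX : X ⊆ wordBall S 1 (R : ℝ))
    (ctr : Γ → ℕ → Γ) (rad : Γ → ℕ → ℝ)
    (hmem : ∀ p ∈ X, ∀ i < n, p ∈ wordBall S (ctr p i) (rad p i))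
    (hsub : ∀ p ∈ X, ∀ i < n, wordBall S (ctr p i) (rad p i) ⊆ wordBall S 1 (R : ℝ))
    (hnest : ∀ p ∈ X, ∀ i, i + 1 < n →
      wordBall S (ctr p i) ((r : ℝ) * rad p i) ⊆ wordBall S (ctr p (i + 1)) (rad p (i + 1))) :
    ∃ 𝒞 : Finset (Γ × ℕ),
      (∀ c ∈ 𝒞, c.1 ∈ X ∧ c.2 < n) ∧
      Set.Pairwise (↑𝒞) (Function.onFun Disjoint
        fun c : Γ × ℕ => wordBall S (ctr c.1 c.2) (rad c.1 c.2)) ∧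
      -- (a): the s-enlargements of the balls in 𝒞 together with Sₙ ∖ S₁ cover all but at
      -- most a ((c-1)/c)ⁿ-fraction of Sₙ, where s = 1 + 4/(r-2) and c = 3^d C².
      ((((⋃ p ∈ X, wordBall S (ctr p (n - 1)) (rad p (n - 1))) \
          ((⋃ c ∈ 𝒞, wordBall S (ctr c.1 c.2) ((1 + 4 / ((r : ℝ) - 2)) * rad c.1 c.2)) ∪
            ((⋃ p ∈ X, wordBall S (ctr p (n - 1)) (rad p (n - 1))) \
              (⋃ p ∈ X, wordBall S (ctr p 0) (rad p 0))))).ncard : ℝ) ≤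
        ((3 ^ d * C ^ 2 - 1) / (3 ^ d * C ^ 2)) ^ n *
          ((⋃ p ∈ X, wordBall S (ctr p (n - 1)) (rad p (n - 1))).ncard : ℝ)) ∧
      -- (b): the union of the s-enlargements has cardinality at least
      -- (1 - ((c-1)/c)ⁿ)|S₁|.
      (1 - ((3 ^ d * C ^ 2 - 1) / (3 ^ d * C ^ 2)) ^ n) *
          (((⋃ p ∈ X, wordBall S (ctr p 0) (rad p 0)).ncard : ℝ)) ≤
        ((⋃ c ∈ 𝒞, wordBall S (ctr c.1 c.2) ((1 + 4 / ((r : ℝ) - 2)) * rad c.1 c.2)).ncard : ℝ) := by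

  classical
  -- basic constants
  set c : ℝ := 3 ^ d * C ^ 2 with hcdef
  have hC0 : (0:ℝ) < C := by linarith
  have hc1 : (1:ℝ) ≤ c := by
    have h3 : (1:ℝ) ≤ 3 ^ d := one_le_pow₀ (by norm_num)
    nlinarith
  have hc0 : (0:ℝ) < c := by linarith
  have hq0 : (0:ℝ) ≤ 1 - 1/c := by
    have : 1/c ≤ 1 := by
      rw [div_le_one hc0]; exact hc1
    linarith
  have hq1 : 1 - 1/c ≤ 1 := by
    have : (0:ℝ) ≤ 1/c := by positivity
    linarith
  have hqeq : (c - 1)/c = 1 - 1/c := by field_simp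
  have hr2 : (0:ℝ) < (r : ℝ) - 2 := by
    have : (3 : ℝ) ≤ (r : ℝ) := by exact_mod_cast hr
    linarith
  have hε0 : (0:ℝ) ≤ 4 / ((r : ℝ) - 2) := by positivity
  -- X is finite
  have hXfin : X.Finite := (wordBall_finite S hC hgr 1 (R:ℝ)).subset hX
  set X0 : Finset Γ := hXfin.toFinset with hX0def
  have hX0 : ∀ p ∈ X0, p ∈ X := fun p hp => (Set.Finite.mem_toFinset hXfin).1 hp
  have hX0' : ∀ p ∈ X, p ∈ X0 := fun p hp => (Set.Finite.mem_toFinset hXfin).2 hp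
  -- the chosen collection
  set 𝒞 : Finset (Γ × ℕ) := (Finset.range n).biUnion
    (fun k => (chD S ctr rad n r X0 k).image (fun q => (q, n - 1 - k))) with h𝒞def
  have h𝒞mem : ∀ cc : Γ × ℕ, cc ∈ 𝒞 ↔
      ∃ k < n, ∃ q ∈ chD S ctr rad n r X0 k, cc = (q, n - 1 - k) := by
    intro cc
    simp only [h𝒞def, Finset.mem_biUnion, Finset.mem_range, Finset.mem_image]
    constructor
    · rintro ⟨k, hk, q, hq, rfl⟩; exact ⟨k, hk, q, hq, rfl⟩
    · rintro ⟨k, hk, q, hq, rfl⟩; exact ⟨k, hk, q, hq, rfl⟩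
  -- basic membership facts about chosen
  have hDX : ∀ k, ∀ q ∈ chD S ctr rad n r X0 k, q ∈ X := fun k q hq =>
    hX0 q (chA_subset_X0 S ctr rad n r X0 k (chD_subset S ctr rad n r X0 k hq))
  -- named sets
  set S1 : Set Γ := ⋃ p ∈ X, wordBall S (ctr p 0) (rad p 0) with hS1def
  set Sn : Set Γ := ⋃ p ∈ X, wordBall S (ctr p (n-1)) (rad p (n-1)) with hSndef
  set E : Set Γ := ⋃ cc ∈ 𝒞, wordBall S (ctr cc.1 cc.2) ((1 + 4 / ((r : ℝ) - 2)) * rad cc.1 cc.2)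
    with hEdef
  have hEnl : ∀ k < n, ∀ q ∈ chD S ctr rad n r X0 k, enl S ctr rad r q (n-1-k) ⊆ E := by
    intro k hk q hq
    have : ((q, n-1-k) : Γ × ℕ) ∈ 𝒞 := (h𝒞mem _).2 ⟨k, hk, q, hq, rfl⟩
    intro x hx
    exact Set.mem_biUnion this hx
  set Z : Set Γ := S1 \ E with hZdef
  -- chain sets
  set Wset : ℕ → Set Γ := fun k => ⋃ p ∈ chA S ctr rad n r X0 k, bal S ctr rad p (n-1-k)
    with hWdef
  set Dball : ℕ → Set Γ := fun k => ⋃ q ∈ chD S ctr rad n r X0 k, bal S ctr rad q (n-1-k)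
    with hDbdef
  set Tset : ℕ → Set Γ := fun k => ⋃ j ∈ Finset.Ico k n, Dball j with hTdef
  set Uhat : ℕ → Set Γ := fun k => (Wset k ∩ S1) ∪ Tset k with hUdef
  -- finiteness
  have hballfin : ∀ (p : Γ) (i : ℕ), (bal S ctr rad p i).Finite :=
    fun p i => wordBall_finite S hC hgr _ _
  have hWfin : ∀ k, (Wset k).Finite := by
    intro k
    exact Set.Finite.biUnion (chA S ctr rad n r X0 k).finite_toSet (fun p _ => hballfin _ _)
  have hDbfin : ∀ k, (Dball k).Finite := by
    intro k
    exact Set.Finite.biUnion (chD S ctr rad n r X0 k).finite_toSet (fun p _ => hballfin _ _)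
  have hTfin : ∀ k, (Tset k).Finite := by
    intro k
    exact Set.Finite.biUnion (Finset.Ico k n).finite_toSet (fun j _ => hDbfin j)
  have hUfin : ∀ k, (Uhat k).Finite := by
    intro k
    exact Set.Finite.union ((hWfin k).inter_of_left _) (hTfin k)
  have hS1fin : S1.Finite := Set.Finite.biUnion hXfin (fun p _ => wordBall_finite S hC hgr _ _)
  have hSnfin : Sn.Finite := Set.Finite.biUnion hXfin (fun p _ => wordBall_finite S hC hgr _ _)
  have hEfin : E.Finite := Set.Finite.biUnion 𝒞.finite_toSet
    (fun cc _ => wordBall_finite S hC hgr _ _)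
  have hZfin : Z.Finite := hS1fin.subset Set.diff_subset

  -- chosen balls of later rounds live in the current W
  have hTsub : ∀ k < n, ∀ j, k ≤ j → j < n → ∀ q ∈ chD S ctr rad n r X0 j,
      bal S ctr rad q (n-1-j) ⊆ Wset k := by
    intro k hk j hkj hjn q hq
    have hqA : q ∈ chA S ctr rad n r X0 k :=
      chA_le S ctr rad n r X0 hkj (chD_subset S ctr rad n r X0 j hq)
    have hmono : bal S ctr rad q (n-1-j) ⊆ bal S ctr rad q (n-1-k) :=
      bal_mono S hS ctr rad n r hr X hmem hnest (hDX j q hq) (by omega) (by omega)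
    intro x hx
    exact Set.mem_biUnion hqA (hmono hx)
  have hDU : ∀ k < n, Dball k ⊆ Uhat k := by
    intro k hk x hx
    refine Set.mem_union_right _ ?_
    exact Set.mem_biUnion (Finset.mem_Ico.2 ⟨le_refl k, hk⟩) hx
  have hUW : ∀ k < n, Uhat k ⊆ Wset k := by
    intro k hk x hx
    rcases hx with hx | hx
    · exact hx.1
    · simp only [hTdef, Set.mem_iUnion] at hx
      obtain ⟨j, hj, hxj⟩ := hx
      rw [Finset.mem_Ico] at hj
      simp only [hDbdef, Set.mem_iUnion] at hxj
      obtain ⟨q, hq, hxq⟩ := hxj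
      exact hTsub k hk j hj.1 hj.2 q hq hxq
  -- the mass of one round's selection captures 1/c of W
  have hWcover : ∀ k < n, ((Wset k).ncard : ℝ) ≤ c * ((Dball k).ncard : ℝ) := by
    intro k hk
    have hcov : Wset k ⊆ ⋃ q ∈ chD S ctr rad n r X0 k,
        wordBall S (ctr q (n-1-k)) (((3 * ⌊rad q (n-1-k)⌋₊ : ℕ)) : ℝ) := by
      intro w hw
      obtain ⟨q, hq, hwq⟩ := three_cover S hS ctr rad n r hr X hmem hnest d C hC hgr X0 hX0 hk hw
      exact Set.mem_biUnion hq hwq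
    have h1 : ((Wset k).ncard : ℕ) ≤ ∑ q ∈ chD S ctr rad n r X0 k,
        (wordBall S (ctr q (n-1-k)) (((3 * ⌊rad q (n-1-k)⌋₊ : ℕ)) : ℝ)).ncard := by
      refine le_trans (Set.ncard_le_ncard hcov ?_) ?_
      · exact Set.Finite.biUnion (chD S ctr rad n r X0 k).finite_toSet
          (fun q _ => wordBall_finite S hC hgr _ _)
      · exact ncard_biUnion_le _ _ (fun q _ => wordBall_finite S hC hgr _ _)
    have h2 : ∀ q ∈ chD S ctr rad n r X0 k,
        ((wordBall S (ctr q (n-1-k)) (((3 * ⌊rad q (n-1-k)⌋₊ : ℕ)) : ℝ)).ncard : ℝ)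
          ≤ c * ((bal S ctr rad q (n-1-k)).ncard : ℝ) := by
      intro q hq
      have hdb := doubling S hS hC hgr (ctr q (n-1-k)) (⌊rad q (n-1-k)⌋₊)
      have hfl : wordBall S (ctr q (n-1-k)) (((⌊rad q (n-1-k)⌋₊ : ℕ)) : ℝ)
          = bal S ctr rad q (n-1-k) := by
        rw [bal]
        exact (wordBall_eq_floor S _ (rad_nonneg S hS ctr rad n r hr X hmem hnest
          (hDX k q hq) (by omega))).symm
      rw [hfl] at hdb
      exact hdb
    have h3 : ((Dball k).ncard : ℕ) = ∑ q ∈ chD S ctr rad n r X0 k,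
        (bal S ctr rad q (n-1-k)).ncard := by
      refine ncard_biUnion_eq _ _ (fun q _ => hballfin _ _) ?_
      intro a ha b hb hab
      exact greedy_pairwise _ _ _ a ha b hb hab
    calc ((Wset k).ncard : ℝ)
        ≤ (∑ q ∈ chD S ctr rad n r X0 k,
            (wordBall S (ctr q (n-1-k)) (((3 * ⌊rad q (n-1-k)⌋₊ : ℕ)) : ℝ)).ncard : ℕ) := by
          exact_mod_cast h1
      _ = ∑ q ∈ chD S ctr rad n r X0 k,
            ((wordBall S (ctr q (n-1-k)) (((3 * ⌊rad q (n-1-k)⌋₊ : ℕ)) : ℝ)).ncard : ℝ) := by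
          push_cast; ring
      _ ≤ ∑ q ∈ chD S ctr rad n r X0 k, c * ((bal S ctr rad q (n-1-k)).ncard : ℝ) :=
          Finset.sum_le_sum h2
      _ = c * ((Dball k).ncard : ℝ) := by
          rw [← Finset.mul_sum, h3]
          push_cast; ring

  -- one round of decay
  have hstep : ∀ k, k + 1 < n →
      ((Uhat (k+1)).ncard : ℝ) ≤ (1 - 1/c) * ((Uhat k).ncard : ℝ) := by
    intro k hk1
    have hk : k < n := by omega
    -- (i) union inclusion
    have hsub : Uhat (k+1) ∪ Dball k ⊆ Uhat k := by
      intro x hx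
      rcases hx with hx | hx
      · rcases hx with hx | hx
        · refine Set.mem_union_left _ ⟨?_, hx.2⟩
          have hx1 := hx.1
          simp only [hWdef, Set.mem_iUnion] at hx1 ⊢
          obtain ⟨p, hp, hxp⟩ := hx1
          refine ⟨p, chA_succ_subset S ctr rad n r X0 k hp, ?_⟩
          have hpX : p ∈ X := hX0 p (chA_subset_X0 S ctr rad n r X0 (k+1) hp)
          exact bal_mono S hS ctr rad n r hr X hmem hnest hpX (by omega) (by omega) hxp
        · refine Set.mem_union_right _ ?_
          simp only [hTdef, Set.mem_iUnion] at hx ⊢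
          obtain ⟨j, hj, hxj⟩ := hx
          rw [Finset.mem_Ico] at hj
          exact ⟨j, Finset.mem_Ico.2 ⟨by omega, hj.2⟩, hxj⟩
      · exact hDU k hk hx
    -- (ii) disjointness
    have hdisj : Disjoint (Uhat (k+1)) (Dball k) := by
      rw [Set.disjoint_left]
      intro x hx1 hx2
      simp only [hDbdef, Set.mem_iUnion] at hx2
      obtain ⟨q, hq, hxq⟩ := hx2
      rcases hx1 with hx1 | hx1
      · have hx1' := hx1.1
        simp only [hWdef, Set.mem_iUnion] at hx1'
        obtain ⟨p, hp, hxp⟩ := hx1'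
        rw [chA_succ, Finset.mem_filter] at hp
        have hdisjpq := hp.2 q hq
        have heq : n - 1 - (k+1) = n - 2 - k := by omega
        rw [heq] at hxp
        exact Set.disjoint_left.1 hdisjpq hxp hxq
      · simp only [hTdef, Set.mem_iUnion] at hx1
        obtain ⟨j, hj, hxj⟩ := hx1
        rw [Finset.mem_Ico] at hj
        simp only [hDbdef, Set.mem_iUnion] at hxj
        obtain ⟨q', hq', hxq'⟩ := hxj
        have hcd := cross_disjoint S hS ctr rad n r hr X hmem hnest X0 hX0
          (show k < j by omega) hj.2
          (chD_subset S ctr rad n r X0 j hq') hq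
        exact Set.disjoint_left.1 hcd hxq' hxq
    -- (iii) counting
    have hcount : ((Uhat (k+1)).ncard : ℝ) + ((Dball k).ncard : ℝ) ≤ ((Uhat k).ncard : ℝ) := by
      have := Set.ncard_union_eq hdisj (hUfin (k+1)) (hDbfin k)
      have hle : (Uhat (k+1) ∪ Dball k).ncard ≤ (Uhat k).ncard :=
        Set.ncard_le_ncard hsub (hUfin k)
      rw [this] at hle
      exact_mod_cast hle
    -- (iv) extraction is at least 1/c of Uhat
    have hUc : ((Uhat k).ncard : ℝ) ≤ c * ((Dball k).ncard : ℝ) := by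
      refine le_trans ?_ (hWcover k hk)
      exact_mod_cast Set.ncard_le_ncard (hUW k hk) (hWfin k)
    -- conclude
    have hDc : ((Uhat k).ncard : ℝ) / c ≤ ((Dball k).ncard : ℝ) := by
      rw [div_le_iff₀ hc0]
      nlinarith
    have : ((Uhat (k+1)).ncard : ℝ) ≤ ((Uhat k).ncard : ℝ) - ((Uhat k).ncard : ℝ)/c := by
      linarith
    calc ((Uhat (k+1)).ncard : ℝ) ≤ ((Uhat k).ncard : ℝ) - ((Uhat k).ncard : ℝ)/c := this
      _ = (1 - 1/c) * ((Uhat k).ncard : ℝ) := by ring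
  -- iterate
  have hiter : ∀ k < n, ((Uhat k).ncard : ℝ) ≤ (1 - 1/c)^k * ((Uhat 0).ncard : ℝ) := by
    intro k
    induction k with
    | zero => intro _; simp
    | succ k ih =>
      intro hk1
      have hk : k < n := by omega
      calc ((Uhat (k+1)).ncard : ℝ) ≤ (1 - 1/c) * ((Uhat k).ncard : ℝ) := hstep k hk1
        _ ≤ (1 - 1/c) * ((1 - 1/c)^k * ((Uhat 0).ncard : ℝ)) := by
            apply mul_le_mul_of_nonneg_left (ih hk) hq0
        _ = (1 - 1/c)^(k+1) * ((Uhat 0).ncard : ℝ) := by ring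

  -- uncovered points stay represented
  have hZUhat : ∀ k < n, Z ⊆ Uhat k := by
    intro k hk x hx
    obtain ⟨hxS1, hxE⟩ := hx
    have hxS1' := hxS1
    rw [hS1def] at hxS1'
    simp only [Set.mem_iUnion] at hxS1'
    obtain ⟨p₀, hp₀X, hxp₀⟩ := hxS1'
    have hxbal : x ∈ bal S ctr rad p₀ 0 := hxp₀
    have hp₀A : ∀ k', k' < n → p₀ ∈ chA S ctr rad n r X0 k' := by
      intro k'
      induction k' with
      | zero => intro _; exact hX0' p₀ hp₀X
      | succ k' ih =>
        intro hk1'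
        have hk' : k' < n := by omega
        by_contra hnd
        obtain ⟨q, hq, hsubenl⟩ := drop_covered S hS ctr rad n r hr X hmem hnest d C hC hgr
          X0 hk1' (ih hk') hnd
        apply hxE
        apply hEnl k' hk' q hq
        apply hsubenl
        exact bal_mono S hS ctr rad n r hr X hmem hnest hp₀X (by omega) (by omega) hxbal
    refine Set.mem_union_left _ ⟨?_, hxS1⟩
    simp only [hWdef, Set.mem_iUnion]
    exact ⟨p₀, hp₀A k hk,
      bal_mono S hS ctr rad n r hr X hmem hnest hp₀X (by omega) (by omega) hxbal⟩
  -- chosen balls are covered, so Z avoids them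
  have hballE : ∀ k < n, ∀ q ∈ chD S ctr rad n r X0 k, bal S ctr rad q (n-1-k) ⊆ E := by
    intro k hk q hq
    refine subset_trans ?_ (hEnl k hk q hq)
    rw [bal, enl]
    apply wordBall_mono
    have h0 : 0 ≤ rad q (n-1-k) :=
      rad_nonneg S hS ctr rad n r hr X hmem hnest (hDX k q hq) (by omega)
    nlinarith
  have hZdisj : Disjoint Z (Dball (n-1)) := by
    rw [Set.disjoint_left]
    intro x hx1 hx2
    simp only [hDbdef, Set.mem_iUnion] at hx2
    obtain ⟨q, hq, hxq⟩ := hx2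
    exact hx1.2 (hballE (n-1) (by omega) q hq hxq)
  -- final counting bound on Z
  have hfinal : ((Z.ncard : ℝ)) ≤ (1 - 1/c)^n * ((Uhat 0).ncard : ℝ) := by
    have hkn : n - 1 < n := by omega
    have hsub : Z ∪ Dball (n-1) ⊆ Uhat (n-1) := by
      intro x hx
      rcases hx with hx | hx
      · exact hZUhat (n-1) hkn hx
      · exact hDU (n-1) hkn hx
    have hcount : ((Z.ncard : ℝ)) + ((Dball (n-1)).ncard : ℝ) ≤ ((Uhat (n-1)).ncard : ℝ) := by
      have := Set.ncard_union_eq hZdisj hZfin (hDbfin (n-1))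
      have hle : (Z ∪ Dball (n-1)).ncard ≤ (Uhat (n-1)).ncard :=
        Set.ncard_le_ncard hsub (hUfin (n-1))
      rw [this] at hle
      exact_mod_cast hle
    have hUc : ((Uhat (n-1)).ncard : ℝ) ≤ c * ((Dball (n-1)).ncard : ℝ) := by
      refine le_trans ?_ (hWcover (n-1) hkn)
      exact_mod_cast Set.ncard_le_ncard (hUW (n-1) hkn) (hWfin (n-1))
    have hDc : ((Uhat (n-1)).ncard : ℝ) / c ≤ ((Dball (n-1)).ncard : ℝ) := by
      rw [div_le_iff₀ hc0]
      nlinarith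
    have h1 : ((Z.ncard : ℝ)) ≤ (1 - 1/c) * ((Uhat (n-1)).ncard : ℝ) := by
      have : ((Z.ncard : ℝ)) ≤ ((Uhat (n-1)).ncard : ℝ) - ((Uhat (n-1)).ncard : ℝ)/c := by
        linarith
      calc ((Z.ncard : ℝ)) ≤ ((Uhat (n-1)).ncard : ℝ) - ((Uhat (n-1)).ncard : ℝ)/c := this
        _ = (1 - 1/c) * ((Uhat (n-1)).ncard : ℝ) := by ring
    have h2 := hiter (n-1) hkn
    have hn1 : n - 1 + 1 = n := by omega
    calc ((Z.ncard : ℝ)) ≤ (1 - 1/c) * ((Uhat (n-1)).ncard : ℝ) := h1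
      _ ≤ (1 - 1/c) * ((1 - 1/c)^(n-1) * ((Uhat 0).ncard : ℝ)) :=
          mul_le_mul_of_nonneg_left h2 hq0
      _ = (1 - 1/c)^(n-1+1) * ((Uhat 0).ncard : ℝ) := by ring
      _ = (1 - 1/c)^n * ((Uhat 0).ncard : ℝ) := by rw [hn1]
  -- bounds on Uhat 0
  have hU0Sn : ((Uhat 0).ncard : ℝ) ≤ (Sn.ncard : ℝ) := by
    have hsub : Uhat 0 ⊆ Sn := by
      intro x hx
      rcases hx with hx | hx
      · have hx1 := hx.1
        simp only [hWdef, Set.mem_iUnion] at hx1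
        obtain ⟨p, hp, hxp⟩ := hx1
        have hpX : p ∈ X := hX0 p (chA_subset_X0 S ctr rad n r X0 0 hp)
        rw [hSndef]
        simp only [Set.mem_iUnion]
        exact ⟨p, hpX, bal_mono S hS ctr rad n r hr X hmem hnest hpX (by omega) (by omega) hxp⟩
      · simp only [hTdef, Set.mem_iUnion] at hx
        obtain ⟨j, hj, hxj⟩ := hx
        rw [Finset.mem_Ico] at hj
        simp only [hDbdef, Set.mem_iUnion] at hxj
        obtain ⟨q, hq, hxq⟩ := hxj
        rw [hSndef]
        simp only [Set.mem_iUnion]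
        exact ⟨q, hDX j q hq,
          bal_mono S hS ctr rad n r hr X hmem hnest (hDX j q hq) (by omega) (by omega) hxq⟩
    exact_mod_cast Set.ncard_le_ncard hsub hSnfin
  have hU0b : ((Uhat 0).ncard : ℝ) ≤ (S1.ncard : ℝ) + ((E \ S1).ncard : ℝ) := by
    have hsub : Uhat 0 ⊆ S1 ∪ (E \ S1) := by
      intro x hx
      rcases hx with hx | hx
      · exact Set.mem_union_left _ hx.2
      · simp only [hTdef, Set.mem_iUnion] at hx
        obtain ⟨j, hj, hxj⟩ := hx
        rw [Finset.mem_Ico] at hj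
        simp only [hDbdef, Set.mem_iUnion] at hxj
        obtain ⟨q, hq, hxq⟩ := hxj
        have hxE : x ∈ E := hballE j hj.2 q hq hxq
        by_cases hxS : x ∈ S1
        · exact Set.mem_union_left _ hxS
        · exact Set.mem_union_right _ ⟨hxE, hxS⟩
    have h1 : (Uhat 0).ncard ≤ (S1 ∪ (E \ S1)).ncard :=
      Set.ncard_le_ncard hsub (hS1fin.union (hEfin.subset Set.diff_subset))
    have h2 : (S1 ∪ (E \ S1)).ncard ≤ S1.ncard + (E \ S1).ncard := Set.ncard_union_le _ _
    have := h1.trans h2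
    exact_mod_cast this
  -- assemble
  refine ⟨𝒞, ?_, ?_, ?_, ?_⟩
  · intro cc hcc
    obtain ⟨k, hk, q, hq, rfl⟩ := (h𝒞mem cc).1 hcc
    exact ⟨hDX k q hq, by omega⟩
  · intro a ha b hb hab
    obtain ⟨k, hk, q, hq, rfl⟩ := (h𝒞mem a).1 ha
    obtain ⟨k', hk', q', hq', rfl⟩ := (h𝒞mem b).1 hb
    show Disjoint (bal S ctr rad q (n-1-k)) (bal S ctr rad q' (n-1-k'))
    rcases lt_trichotomy k k' with hlt | heq | hgt
    · exact (cross_disjoint S hS ctr rad n r hr X hmem hnest X0 hX0 hlt hk'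
        (chD_subset S ctr rad n r X0 k' hq') hq).symm
    · subst heq
      have hqq : q ≠ q' := by
        intro hqq'; subst hqq'; exact hab rfl
      exact greedy_pairwise _ _ _ q hq q' hq' hqq
    · exact cross_disjoint S hS ctr rad n r hr X hmem hnest X0 hX0 hgt hk
        (chD_subset S ctr rad n r X0 k hq) hq'
  · -- (a)
    rw [← hEdef, hqeq]
    have hsubZ : Sn \ (E ∪ (Sn \ S1)) ⊆ Z := by
      intro x hx
      obtain ⟨hx1, hx2⟩ := hx
      rw [Set.mem_union] at hx2
      push_neg at hx2
      have hx3 : x ∈ S1 := by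
        by_contra hxn
        exact hx2.2 ⟨hx1, hxn⟩
      exact ⟨hx3, hx2.1⟩
    have h1 : ((Sn \ (E ∪ (Sn \ S1))).ncard : ℝ) ≤ (Z.ncard : ℝ) := by
      exact_mod_cast Set.ncard_le_ncard hsubZ hZfin
    have h2 : ((Z.ncard : ℝ)) ≤ (1 - 1/c)^n * (Sn.ncard : ℝ) := by
      refine hfinal.trans ?_
      exact mul_le_mul_of_nonneg_left hU0Sn (pow_nonneg hq0 n)
    linarith
  · -- (b)
    rw [← hEdef, hqeq]
    set Q : ℝ := (1 - 1/c)^n with hQdef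
    have hQ0 : 0 ≤ Q := pow_nonneg hq0 n
    have hQ1 : Q ≤ 1 := pow_le_one₀ hq0 hq1
    have hEsplit : ((E.ncard : ℝ)) = (((S1 ∩ E).ncard : ℝ)) + (((E \ S1).ncard : ℝ)) := by
      have heq : E = (S1 ∩ E) ∪ (E \ S1) := by
        ext x
        constructor
        · intro hx
          by_cases hxS : x ∈ S1
          · exact Set.mem_union_left _ ⟨hxS, hx⟩
          · exact Set.mem_union_right _ ⟨hx, hxS⟩
        · rintro (hx | hx)
          exacts [hx.2, hx.1]
      have hdisj : Disjoint (S1 ∩ E) (E \ S1) := by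
        rw [Set.disjoint_left]
        rintro x ⟨hx1, _⟩ ⟨_, hx2⟩
        exact hx2 hx1
      have h' := Set.ncard_union_eq hdisj (hS1fin.inter_of_left _)
        (hEfin.subset Set.diff_subset)
      have h'' : E.ncard = ((S1 ∩ E) ∪ (E \ S1)).ncard := by rw [← heq]
      rw [h'', h']
      push_cast; ring
    have hS1split : ((S1.ncard : ℝ)) = (((S1 ∩ E).ncard : ℝ)) + ((Z.ncard : ℝ)) := by
      have heq : S1 = (S1 ∩ E) ∪ Z := by
        ext x
        constructor
        · intro hx
          by_cases hxE : x ∈ E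
          · exact Set.mem_union_left _ ⟨hx, hxE⟩
          · exact Set.mem_union_right _ ⟨hx, hxE⟩
        · rintro (hx | hx)
          exacts [hx.1, hx.1]
      have hdisj : Disjoint (S1 ∩ E) Z := by
        rw [Set.disjoint_left]
        rintro x ⟨_, hx1⟩ ⟨_, hx2⟩
        exact hx2 hx1
      have h' := Set.ncard_union_eq hdisj (hS1fin.inter_of_left _) hZfin
      have h'' : S1.ncard = ((S1 ∩ E) ∪ Z).ncard := by rw [← heq]
      rw [h'', h']
      push_cast; ring
    have hZb : ((Z.ncard : ℝ)) ≤ Q * ((S1.ncard : ℝ) + ((E \ S1).ncard : ℝ)) := by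
      refine hfinal.trans ?_
      exact mul_le_mul_of_nonneg_left hU0b hQ0
    have hW0 : (0:ℝ) ≤ ((E \ S1).ncard : ℝ) := by positivity
    nlinarith
end

section
/- Let Γ be a group of polynomial growth of degree d with lim_{n→∞}|B(n)|/n^d = c_Γ > 0, and let δ ∈ (0,1). Then there exist n₀, r₀ ∈ ℕ depending only on Γ and δ such that: whenever 𝒞 is a finite collection of pairwise disjoint balls in Γ all of whose radii exceed n₀, and r > r₀, then |⊔_{W∈𝒞} int_r(W)| > (1−δ)|⊔_{W∈𝒞} W| and |⊔_{W∈𝒞} (W ∖ int_r(W))| < δ|⊔_{W∈𝒞} W|. -/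
/-!
Pansu's asymptotics `|B(t)| ~ c t ^ d` make ball volumes insensitive to shrinking the radius
by a factor `1 - η` with `η` small: `|B((1 - η) s)| ≥ (c - ε) (1 - η) ^ d s ^ d > (1 - δ) |B(s)|`
for large `s`. Once `r > 5 / η`, the `r`-interior of each ball therefore fills more than a
`(1 - δ)`-fraction of it. Right translations preserve ball sizes and the balls are disjoint, so
summing over the collection gives both bounds.
-/

open Filter MeasureTheory Function Set
open scoped BigOperators

variable {Γ : Type*} [Group Γ]

theorem exists_one_sub_mul_lt_of_tendsto_div_pow {V : ℝ → ℝ} {d : ℕ} {c δ : ℝ}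
    (hV : Tendsto (fun t => V t / t ^ d) atTop (nhds c)) (hc : 0 < c) (hδ₀ : 0 < δ)
    (hδ₁ : δ < 1) :
    ∃ η > 0, ∃ T, ∀ s t, T ≤ s → (1 - η) * s ≤ t → (1 - δ) * V s < V t := by
  set ε := c * δ / 4 with hε_def
  set η := δ / (4 * (d + 1))
  have hε : 0 < ε := by positivity
  have hcε : 0 < c - ε := by rw [hε_def]; nlinarith
  have hη : 0 < η := by positivity
  have hη_le : η ≤ 1 / 2 := by
    rw [div_le_iff₀ (by positivity)]; nlinarith [d.cast_nonneg (α := ℝ)]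
  have hdη : d * η ≤ δ / 4 := by
    rw [mul_div_assoc', div_le_div_iff₀ (by positivity) (by norm_num)]; nlinarith
  obtain ⟨T, hT⟩ := eventually_atTop.1 <|
    (hV.eventually (Ioo_mem_nhds (sub_lt_self c hε) (lt_add_of_pos_right c hε))).and
      (eventually_gt_atTop 0)
  have upper : ∀ t, T ≤ t → V t < (c + ε) * t ^ d := fun t ht =>
    (div_lt_iff₀ (pow_pos (hT t ht).2 d)).1 (hT t ht).1.2
  have lower : ∀ t, T ≤ t → (c - ε) * t ^ d < V t := fun t ht =>
    (lt_div_iff₀ (pow_pos (hT t ht).2 d)).1 (hT t ht).1.1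
  refine ⟨η, hη, 2 * max T 0, fun s t hs ht => ?_⟩
  have hs₀ : 0 ≤ s := by linarith [le_max_right T 0]
  have hts : T ≤ t := by nlinarith [le_max_left T 0, le_max_right T 0]
  -- Bernoulli's inequality turns `t ≥ (1 - η) s` into `t ^ d ≥ (1 - δ / 4) s ^ d`.
  have hpow : (1 - δ / 4) * s ^ d ≤ t ^ d := calc
    (1 - δ / 4) * s ^ d ≤ (1 - η) ^ d * s ^ d := by
      have bernoulli := one_add_mul_le_pow (show (-2 : ℝ) ≤ -η by linarith) d
      rw [← sub_eq_add_neg] at bernoulli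
      gcongr
      linarith
    _ = ((1 - η) * s) ^ d := (mul_pow _ _ _).symm
    _ ≤ t ^ d := by gcongr; nlinarith
  calc (1 - δ) * V s < (1 - δ) * ((c + ε) * s ^ d) := by
        refine mul_lt_mul_of_pos_left (upper s ?_) (by linarith)
        linarith [le_max_left T 0, le_max_right T 0]
    _ ≤ (c - ε) * ((1 - δ / 4) * s ^ d) := by
        rw [← mul_assoc, ← mul_assoc]
        refine mul_le_mul_of_nonneg_right ?_ (pow_nonneg hs₀ d)
        rw [hε_def]
        nlinarith [mul_pos hc hδ₀, mul_pos (mul_pos hc hδ₀) hδ₀]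
    _ ≤ (c - ε) * t ^ d := mul_le_mul_of_nonneg_left hpow hcε.le
    _ < V t := lower t hts

theorem mul_ncard_iUnion_lt_mul_ncard_iUnion {α ι : Type*} [Fintype ι] [Nonempty ι]
    {s t : ι → Set α} (hs : ∀ i, (s i).Finite) (ht : ∀ i, (t i).Finite)
    (hs_disj : Pairwise (Disjoint on s)) (ht_disj : Pairwise (Disjoint on t)) {a b : ℝ}
    (h : ∀ i, a * (s i).ncard < b * (t i).ncard) :
    a * (⋃ i, s i).ncard < b * (⋃ i, t i).ncard := by
  simp only [ncard_iUnion_of_finite hs hs_disj, ncard_iUnion_of_finite ht ht_disj,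
    finsum_eq_sum_of_fintype, Nat.cast_sum, Finset.mul_sum]
  exact Finset.sum_lt_sum_of_nonempty Finset.univ_nonempty fun i _ => h i

theorem ncard_sdiff_lt_of_one_sub_mul_lt {α : Type*} {A B : Set α} (hAB : A ⊆ B)
    (hB : B.Finite) {δ : ℝ} (h : (1 - δ) * B.ncard < A.ncard) :
    ((B \ A).ncard : ℝ) < δ * B.ncard := by
  have := congrArg (Nat.cast (R := ℝ)) (ncard_sdiff_add_ncard_of_subset hAB hB)
  push_cast at this
  linarith

theorem one_sub_mul_ncard_iUnion_lt_and_ncard_iUnion_sdiff_lt {α ι : Type*} [Fintype ι]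
    [Nonempty ι] {A B : ι → Set α} (hB : ∀ i, (B i).Finite) (hAB : ∀ i, A i ⊆ B i)
    (hB_disj : Pairwise (Disjoint on B)) {δ : ℝ} (h : ∀ i, (1 - δ) * (B i).ncard < (A i).ncard) :
    (1 - δ) * (⋃ i, B i).ncard < (⋃ i, A i).ncard ∧
      ((⋃ i, B i \ A i).ncard : ℝ) < δ * (⋃ i, B i).ncard := by
  have hA i : (A i).Finite := (hB i).subset (hAB i)
  constructor
  · simpa using mul_ncard_iUnion_lt_mul_ncard_iUnion hB hA hB_disj
      (fun i j hij => (hB_disj hij).mono (hAB i) (hAB j)) (b := 1) (by simpa using h)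
  · simpa using mul_ncard_iUnion_lt_mul_ncard_iUnion (fun i => (hB i).sdiff) hB
      (fun i j hij => (hB_disj hij).mono sdiff_subset sdiff_subset) hB_disj (a := 1)
      (by simpa using fun i => ncard_sdiff_lt_of_one_sub_mul_lt (hAB i) (hB i) (h i))

theorem tendsto_natFloor_div_pow {a : ℕ → ℝ} {d : ℕ} {c : ℝ}
    (ha : Tendsto (fun n : ℕ => a n / (n : ℝ) ^ d) atTop (nhds c)) :
    Tendsto (fun t : ℝ => a ⌊t⌋₊ / t ^ d) atTop (nhds c) := by
  have h := (ha.comp tendsto_nat_floor_atTop).mul (tendsto_nat_floor_div_atTop.pow d)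
  rw [one_pow, mul_one] at h
  refine h.congr' ?_
  filter_upwards [eventually_ge_atTop 1] with t ht
  have hfloor : (⌊t⌋₊ : ℝ) ≠ 0 := Nat.cast_ne_zero.2 (Nat.floor_pos.2 ht).ne'
  simp only [comp_apply, div_pow]
  field_simp

theorem wordBall_mono (S : Finset Γ) (x : Γ) {r r' : ℝ} (h : r ≤ r') :
    wordBall S x r ⊆ wordBall S x r' := fun _ hy => hy.trans h

theorem wordBall_eq_image_mul_right (S : Finset Γ) (x : Γ) (r : ℝ) :
    wordBall S x r = (· * x) '' wordBall S 1 r := by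
  ext y
  simp only [wordBall, mem_image, mem_ofPred_eq]
  constructor
  · intro h
    exact ⟨y * x⁻¹, by simpa [mul_inv_rev] using h, by group⟩
  · rintro ⟨z, hz, rfl⟩
    simpa [mul_inv_rev, ← mul_assoc] using hz

theorem ncard_wordBall (S : Finset Γ) (x : Γ) (r : ℝ) :
    (wordBall S x r).ncard = (wordBall S 1 r).ncard := by
  rw [wordBall_eq_image_mul_right]
  exact ncard_image_of_injective _ (mul_left_injective x)

theorem wordBall_natFloor (S : Finset Γ) (x : Γ) {r : ℝ} (hr : 0 ≤ r) :
    wordBall S x ⌊r⌋₊ = wordBall S x r := by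
  ext y
  simp only [wordBall, mem_ofPred_eq, Nat.cast_le]
  exact Nat.le_floor_iff hr

section Growth

variable {S : Finset Γ} {d : ℕ} {c : ℝ}

theorem tendsto_ncard_wordBall_div_pow
    (hP : Tendsto (fun n : ℕ => ((wordBall S 1 n).ncard : ℝ) / (n : ℝ) ^ d) atTop (nhds c)) :
    Tendsto (fun t : ℝ => ((wordBall S 1 t).ncard : ℝ) / t ^ d) atTop (nhds c) := by
  refine (tendsto_natFloor_div_pow hP).congr' ?_
  filter_upwards [eventually_ge_atTop 0] with t ht
  rw [wordBall_natFloor S 1 ht]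

-- A positive limit forces `|B(n)| ≠ 0` for large `n`, and `ncard` of an infinite set is `0`.
theorem wordBall_finite
    (hP : Tendsto (fun n : ℕ => ((wordBall S 1 n).ncard : ℝ) / (n : ℝ) ^ d) atTop (nhds c))
    (hc : 0 < c) (x : Γ) (r : ℝ) : (wordBall S x r).Finite := by
  obtain ⟨n, hn, hrn⟩ := ((hP.eventually (eventually_gt_nhds hc)).and
    (eventually_ge_atTop ⌈r⌉₊)).exists
  have hB : (wordBall S 1 n).Finite :=
    finite_of_ncard_ne_zero fun h => by simp [h] at hn
  rw [wordBall_eq_image_mul_right]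
  exact (hB.subset (wordBall_mono S 1 ((Nat.le_ceil r).trans (by exact_mod_cast hrn)))).image _

end Growth

theorem small_boundary_general (S : Finset Γ)
    (d : ℕ) (cΓ : ℝ) (hc : 0 < cΓ)
    (hP : Tendsto (fun n : ℕ => ((wordBall S 1 (n : ℝ)).ncard : ℝ) / (n : ℝ) ^ d)
      atTop (nhds cΓ))
    (δ : ℝ) (hδ : δ ∈ Set.Ioo (0 : ℝ) 1) :
    ∃ n₀ r₀ : ℕ, ∀ (k : ℕ), 0 < k → ∀ (y : Fin k → Γ) (s : Fin k → ℝ),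
      (∀ i, (n₀ : ℝ) < s i) →
      Pairwise (Function.onFun Disjoint fun i => wordBall S (y i) (s i)) →
      ∀ r : ℝ, (r₀ : ℝ) < r →
      (1 - δ) * ((⋃ i, wordBall S (y i) (s i)).ncard : ℝ) <
          ((⋃ i, wordBall S (y i) ((1 - 5 / r) * s i)).ncard : ℝ) ∧
        ((⋃ i, (wordBall S (y i) (s i) \ wordBall S (y i) ((1 - 5 / r) * s i))).ncard : ℝ) <
          δ * ((⋃ i, wordBall S (y i) (s i)).ncard : ℝ) := by
  obtain ⟨η, hη, T, hT⟩ :=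
    exists_one_sub_mul_lt_of_tendsto_div_pow (tendsto_ncard_wordBall_div_pow hP) hc hδ.1 hδ.2
  refine ⟨⌈T⌉₊, ⌈5 / η⌉₊, fun k hk y s hs hdisj r hr => ?_⟩
  have : Nonempty (Fin k) := ⟨⟨0, hk⟩⟩
  have hr₀ : 5 / η < r := (Nat.le_ceil _).trans_lt hr
  have h5r : 0 < 5 / r ∧ 5 / r < η := by
    have hr_pos : 0 < r := (div_pos (by norm_num) hη).trans hr₀
    exact ⟨by positivity, (div_lt_iff₀ hr_pos).2 (by rwa [div_lt_iff₀ hη, mul_comm] at hr₀)⟩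
  have hs_pos i : 0 < s i := (Nat.cast_nonneg _).trans_lt (hs i)
  refine one_sub_mul_ncard_iUnion_lt_and_ncard_iUnion_sdiff_lt
    (A := fun i => wordBall S (y i) ((1 - 5 / r) * s i)) (B := fun i => wordBall S (y i) (s i))
    (fun i => wordBall_finite hP hc _ _) (fun i => wordBall_mono S _ ?_) hdisj fun i => ?_
  · exact mul_le_of_le_one_left (hs_pos i).le (by linarith)
  · rw [ncard_wordBall S (y i), ncard_wordBall S (y i)]
    exact hT _ _ ((Nat.le_ceil T).trans (hs i).le)
      (mul_le_mul_of_nonneg_right (by linarith) (hs_pos i).le)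

/-- For large balls and large `r`, the `r`-interiors of a disjoint collection of balls
occupy more than a `(1-δ)`-fraction, and the `r`-boundaries less than a `δ`-fraction. -/
theorem small_boundary (S : Finset Γ) (hS : Subgroup.closure (S : Set Γ) = ⊤)
    (d : ℕ) (cΓ : ℝ) (hc : 0 < cΓ)
    (hP : Tendsto (fun n : ℕ => ((wordBall S 1 (n : ℝ)).ncard : ℝ) / (n : ℝ) ^ d)
      atTop (nhds cΓ))
    (δ : ℝ) (hδ : δ ∈ Set.Ioo (0 : ℝ) 1) :
    ∃ n₀ r₀ : ℕ, ∀ (k : ℕ), 0 < k → ∀ (y : Fin k → Γ) (s : Fin k → ℝ),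
      (∀ i, (n₀ : ℝ) < s i) →
      Pairwise (Function.onFun Disjoint fun i => wordBall S (y i) (s i)) →
      ∀ r : ℝ, (r₀ : ℝ) < r →
      (1 - δ) * ((⋃ i, wordBall S (y i) (s i)).ncard : ℝ) <
          ((⋃ i, wordBall S (y i) ((1 - 5 / r) * s i)).ncard : ℝ) ∧
        ((⋃ i, (wordBall S (y i) (s i) \ wordBall S (y i) ((1 - 5 / r) * s i))).ncard : ℝ) <
          δ * ((⋃ i, wordBall S (y i) (s i)).ncard : ℝ) :=
  small_boundary_general S d cΓ hc hP δ hδ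
end
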